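/- arXiv:2307.01697 — 3 statements merged into one kernel-verified Lean document; each statement's English description precedes it below -/
import Mathlib

section
/- In the synthetic setup, for all classes α₁,…,αₙ ∈ Pos(X), the intersection number α₁⋯αₙ is strictly positive. -/
open scoped BigOperators
noncomputable section

/-- The synthetic pluripotential-theoretic setup of Boucksom–Jonsson. -/
structure PPSetup where
  /-- the compact Hausdorff topological space -/
  X : Type
  [topX : TopologicalSpace X]
  [cptX : CompactSpace X]
  [t2X : T2Space X]
  /-- the dense space of test functions -/
  D : Submodule ℝ C(X, ℝ)
  D_dense : Dense (D : Set C(X, ℝ))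
  D_const : ∀ c : ℝ, ContinuousMap.const X c ∈ D
  /-- the space of closed (1,1)-forms, a partially ordered real vector space -/
  Z : Type
  [zGroup : AddCommGroup Z]
  [zOrder : PartialOrder Z]
  [zOrdered : IsOrderedAddMonoid Z]
  [zModule : Module ℝ Z]
  [zSMul : PosSMulStrictMono ℝ Z]
  [zSMulReflect : PosSMulReflectLT ℝ Z]
  /-- the positive cone spans Z -/
  pos_spans : Submodule.span ℝ {θ : Z | 0 ≤ θ} = ⊤
  /-- the positive cone is closed in the finest vector space topology -/
  pos_closed : ∀ (k : ℕ) (u : (Fin k → ℝ) →ₗ[ℝ] Z), IsClosed {x : Fin k → ℝ | 0 ≤ u x}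
  /-- the ddᶜ operator -/
  ddc : D →ₗ[ℝ] Z
  ddc_const : ∀ c : ℝ, ddc ⟨ContinuousMap.const X c, D_const c⟩ = 0
  /-- the dimension is n = m + 1 ≥ 1 -/
  m : ℕ
  /-- the wedge pairing: an n-tuple of forms yields a signed Radon measure, encoded as the
  linear functional (f ↦ ∫ f θ₁∧⋯∧θₙ) on C(X,ℝ). -/
  wedge : MultilinearMap ℝ (fun _ : Fin (m + 1) => Z) (C(X, ℝ) →ₗ[ℝ] ℝ)
  wedge_symm : ∀ (σ : Equiv.Perm (Fin (m + 1))) (θ : Fin (m + 1) → Z), wedge (θ ∘ σ) = wedge θ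
  wedge_ne : wedge ≠ 0
  wedge_pos : ∀ θ : Fin (m + 1) → Z, (∀ i, 0 ≤ θ i) → ∀ f : C(X, ℝ), 0 ≤ f → 0 ≤ wedge θ f
  hodge_symm : ∀ (θ : Fin m → Z) (φ ψ : D),
    wedge (Fin.cons (ddc ψ) θ) (φ : C(X, ℝ)) = wedge (Fin.cons (ddc φ) θ) (ψ : C(X, ℝ))
  hodge_neg : ∀ θ : Fin m → Z, (∀ i, 0 ≤ θ i) → ∀ φ : D,
    wedge (Fin.cons (ddc φ) θ) (φ : C(X, ℝ)) ≤ 0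

attribute [instance] PPSetup.topX PPSetup.cptX PPSetup.t2X PPSetup.zGroup PPSetup.zOrder
  PPSetup.zOrdered PPSetup.zModule PPSetup.zSMul PPSetup.zSMulReflect

namespace PPSetup

variable (S : PPSetup)

/-- the dimension -/
abbrev n : ℕ := S.m + 1

/-- the constant function 1 -/
def one : C(S.X, ℝ) := ContinuousMap.const S.X 1

/-- constants as test functions -/
def constD (c : ℝ) : S.D := ⟨ContinuousMap.const S.X c, S.D_const c⟩

/-- Bott–Chern cohomology -/
abbrev HBC := S.Z ⧸ LinearMap.range S.ddc

/-- the class of a form -/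
def cls (θ : S.Z) : S.HBC := Submodule.Quotient.mk θ

/-- the positive cone in Bott–Chern cohomology: the interior of the image of Z₊ with respect to
the finest vector space topology, described concretely as the algebraic interior. -/
def Pos : Set S.HBC :=
  {α | ∀ β : S.HBC, ∃ ε : ℝ, 0 < ε ∧ ∀ t : ℝ, |t| ≤ ε → ∃ θ : S.Z, 0 ≤ θ ∧ S.cls θ = α + t • β}

/-- θ-psh test functions -/
def psh (θ : S.Z) : Set S.D := {φ | 0 ≤ θ + S.ddc φ}

/-- the energy pairing, given by its explicit formula -/
def epair (p : Fin (S.m + 2) → S.Z × S.D) : ℝ :=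
  ∑ i : Fin (S.m + 2),
    S.wedge (fun j : Fin (S.m + 1) =>
      if ((i.succAbove j : Fin (S.m + 2)) : ℕ) < (i : ℕ) then (p (i.succAbove j)).1
      else (p (i.succAbove j)).1 + S.ddc (p (i.succAbove j)).2)
      (((p i).2 : C(S.X, ℝ)))

/-- (ω,φ)^{n+1} -/
def epow (ω : S.Z) (φ : S.D) : ℝ := S.epair fun _ => (ω, φ)

/-- the volume ∫ ωⁿ -/
def Vol (ω : S.Z) : ℝ := S.wedge (fun _ => ω) S.one

/-- the Monge–Ampère energy E_ω(φ) = (ω,φ)^{n+1}/((n+1)V_ω) -/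
def En (ω : S.Z) (φ : S.D) : ℝ := S.epow ω φ / ((S.m + 2) * S.Vol ω)

/-- the Monge–Ampère measure MA_ω(φ) = V_ω⁻¹ (ω+ddᶜφ)ⁿ, as a functional on C(X,ℝ) -/
def MAfun (ω : S.Z) (φ : S.D) : C(S.X, ℝ) →ₗ[ℝ] ℝ := (S.Vol ω)⁻¹ • S.wedge fun _ => ω + S.ddc φ

/-- μ_ω = V_ω⁻¹ ωⁿ -/
def muOmega (ω : S.Z) : C(S.X, ℝ) →ₗ[ℝ] ℝ := (S.Vol ω)⁻¹ • S.wedge fun _ => ω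

/-- the Dirichlet functional J_ω(φ,ψ) -/
def Jfun (ω : S.Z) (φ ψ : S.D) : ℝ :=
  S.En ω φ - S.En ω ψ + S.MAfun ω φ ((ψ : C(S.X, ℝ)) - (φ : C(S.X, ℝ)))

/-- J_ω(φ) := J_ω(0,φ) = ∫φ dμ_ω − E_ω(φ) -/
def Jnorm (ω : S.Z) (φ : S.D) : ℝ := S.muOmega ω (φ : C(S.X, ℝ)) - S.En ω φ

/-- probability measures, encoded as positive normalized functionals on C(X,ℝ) -/
def isProb (μ : C(S.X, ℝ) →ₗ[ℝ] ℝ) : Prop :=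
  (∀ f : C(S.X, ℝ), 0 ≤ f → 0 ≤ μ f) ∧ μ S.one = 1

/-- the space 𝓜 of Radon probability measures -/
abbrev M := {μ : C(S.X, ℝ) →ₗ[ℝ] ℝ // S.isProb μ}

/-- the defining set for the energy J_ω(μ) -/
def Jset (ω : S.Z) (μ : C(S.X, ℝ) →ₗ[ℝ] ℝ) : Set ℝ :=
  {x | ∃ φ ∈ S.psh ω, x = S.En ω φ - μ (φ : C(S.X, ℝ))}

/-- μ has finite energy: J_ω(μ) < ∞ -/
def finEnergy (ω : S.Z) (μ : C(S.X, ℝ) →ₗ[ℝ] ℝ) : Prop := BddAbove (S.Jset ω μ)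

/-- the energy J_ω(μ) of a measure -/
def Jmes (ω : S.Z) (μ : C(S.X, ℝ) →ₗ[ℝ] ℝ) : ℝ := sSup (S.Jset ω μ)

/-- the relative energy J_ω(μ,ψ) -/
def JmesRel (ω : S.Z) (μ : C(S.X, ℝ) →ₗ[ℝ] ℝ) (ψ : S.D) : ℝ :=
  sSup {x | ∃ φ ∈ S.psh ω, x = S.En ω φ - S.En ω ψ + μ ((ψ : C(S.X, ℝ)) - (φ : C(S.X, ℝ)))}

/-- the space 𝓜¹_ω of measures of finite energy -/
abbrev M1 (ω : S.Z) := {μ : S.M // S.finEnergy ω μ.1}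

/-- the weak topology on 𝓜 -/
def weakTop : TopologicalSpace S.M :=
  TopologicalSpace.induced (fun μ (f : C(S.X, ℝ)) => μ.1 f) inferInstance

/-- the strong topology on 𝓜¹_ω: coarsest refinement of the weak topology making J_ω continuous -/
def strongTop (ω : S.Z) : TopologicalSpace (S.M1 ω) :=
  (TopologicalSpace.induced (fun μ : S.M1 ω => μ.1) S.weakTop) ⊓
    TopologicalSpace.induced (fun μ : S.M1 ω => S.Jmes ω μ.1.1) inferInstance

/-- the defining set for T_ω -/
def Tset (ω : S.Z) : Set ℝ :=
  {x | ∃ φ ∈ S.psh ω, x = (⨆ p : S.X, (φ : C(S.X, ℝ)) p) - S.muOmega ω (φ : C(S.X, ℝ))}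

/-- the submean value property for ω: T_ω < ∞ -/
def submeanBdd (ω : S.Z) : Prop := BddAbove (S.Tset ω)

/-- T_ω -/
def Tsup (ω : S.Z) : ℝ := sSup (S.Tset ω)

/-- commensurability of two semipositive forms: finite Thompson distance -/
def commensurable (ω ω' : S.Z) : Prop :=
  ∃ δ : ℝ, 0 ≤ δ ∧ Real.exp (-δ) • ω ≤ ω' ∧ ω' ≤ Real.exp δ • ω

/-- the Thompson distance -/
def dT (ω ω' : S.Z) : ℝ :=
  sInf {δ : ℝ | 0 ≤ δ ∧ Real.exp (-δ) • ω ≤ ω' ∧ ω' ≤ Real.exp δ • ω}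

/-- θ is ω-bounded, i.e. ‖θ‖_ω < ∞ -/
def bddBy (ω θ : S.Z) : Prop := ∃ C : ℝ, 0 ≤ C ∧ -(C • ω) ≤ θ ∧ θ ≤ C • ω

/-- ‖θ‖_ω -/
def znorm (ω θ : S.Z) : ℝ := sInf {C : ℝ | 0 ≤ C ∧ -(C • ω) ≤ θ ∧ θ ≤ C • ω}

/-- 𝒟_ω admits maxima -/
def admitsMaxima (ω : S.Z) : Prop :=
  ∀ φ ∈ S.psh ω, ∀ ψ ∈ S.psh ω, ∀ f : S.D,
    (∀ x : S.X, max ((φ : C(S.X, ℝ)) x) ((ψ : C(S.X, ℝ)) x) < (f : C(S.X, ℝ)) x) →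
    ∃ τ ∈ S.psh ω,
      (∀ x : S.X, max ((φ : C(S.X, ℝ)) x) ((ψ : C(S.X, ℝ)) x) ≤ (τ : C(S.X, ℝ)) x) ∧
      ∀ x : S.X, (τ : C(S.X, ℝ)) x < (f : C(S.X, ℝ)) x

/-- the orthogonality property for ω -/
def orthogonal (ω : S.Z) : Prop :=
  S.admitsMaxima ω ∧
    ∀ f : S.D, ∀ ε : ℝ, 0 < ε →
      ∃ φ₀ ∈ S.psh ω, (∀ x : S.X, (φ₀ : C(S.X, ℝ)) x < (f : C(S.X, ℝ)) x) ∧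
        ∀ φ ∈ S.psh ω, (∀ x : S.X, (φ₀ : C(S.X, ℝ)) x ≤ (φ : C(S.X, ℝ)) x) →
          (∀ x : S.X, (φ : C(S.X, ℝ)) x < (f : C(S.X, ℝ)) x) →
          S.MAfun ω φ ((f : C(S.X, ℝ)) - (φ : C(S.X, ℝ))) ≤ ε

/-- the extended energy Ẽ_ω(f) for f ∈ C⁰(X) -/
def EnExt (ω : S.Z) (f : C(S.X, ℝ)) : ℝ :=
  sSup {x | ∃ φ ∈ S.psh ω, (φ : C(S.X, ℝ)) ≤ f ∧ x = S.En ω φ}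

/-- the metric dd_ω on measures -/
def ddMetric (ω : S.Z) (μ ν : C(S.X, ℝ) →ₗ[ℝ] ℝ) : ℝ :=
  sSup {x | ∃ φ ∈ S.psh ω, S.Jnorm ω φ ≤ 1 ∧ x = |μ (φ : C(S.X, ℝ)) - ν (φ : C(S.X, ℝ))|}

/-- the characterizing property of the Dirichlet quasi-metric d_ω on 𝓜¹_ω -/
def isDirichlet (ω : S.Z) (d : S.M1 ω → S.M1 ω → ℝ) : Prop :=
  (∀ μ ν, 0 ≤ d μ ν) ∧
  (@Continuous (S.M1 ω × S.M1 ω) ℝ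
    (@instTopologicalSpaceProd _ _ (S.strongTop ω) (S.strongTop ω)) _ fun p => d p.1 p.2) ∧
  ∀ φ ∈ S.psh ω, ∀ ψ ∈ S.psh ω, ∀ μ ν : S.M1 ω,
    μ.1.1 = S.MAfun ω φ → ν.1.1 = S.MAfun ω ψ → d μ ν = S.Jfun ω φ ψ

/-- the characterizing property of the θ-twisted energy J_ω^θ on 𝓜¹ -/
def isTwisted (ω θ : S.Z) (Jt : S.M1 ω → ℝ) : Prop :=
  (@Continuous _ _ (S.strongTop ω) _ Jt) ∧
  ∀ φ ∈ S.psh ω, ∀ ν : S.M1 ω, ν.1.1 = S.MAfun ω φ →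
    Jt ν = deriv (fun t : ℝ => S.En (ω + t • θ) φ) 0

/-! ### Auxiliary lemmas for Statement 0 -/

lemma one_nonneg : (0 : C(S.X, ℝ)) ≤ S.one := by
  rw [ContinuousMap.le_def]
  intro x
  simp [PPSetup.one]

/-- The positive cone spans, so every element is a difference of nonnegative elements. -/
lemma exists_sub (z : S.Z) : ∃ a b : S.Z, 0 ≤ a ∧ 0 ≤ b ∧ z = a - b := by
  let P : Submodule ℝ S.Z :=
    { carrier := {z | ∃ a b : S.Z, 0 ≤ a ∧ 0 ≤ b ∧ z = a - b}
      add_mem' := by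
        rintro x y ⟨a, b, ha, hb, rfl⟩ ⟨a', b', ha', hb', rfl⟩
        exact ⟨a + a', b + b', add_nonneg ha ha', add_nonneg hb hb', by abel⟩
      zero_mem' := ⟨0, 0, le_refl _, le_refl _, by simp⟩
      smul_mem' := by
        rintro c x ⟨a, b, ha, hb, rfl⟩
        rcases le_or_gt 0 c with hc | hc
        · exact ⟨c • a, c • b, smul_nonneg hc ha, smul_nonneg hc hb, by
            rw [smul_sub]⟩
        · refine ⟨(-c) • b, (-c) • a, smul_nonneg (by linarith) hb,
            smul_nonneg (by linarith) ha, ?_⟩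
          rw [smul_sub, neg_smul, neg_smul]
          abel }
  have hz : z ∈ P := by
    have : Submodule.span ℝ {θ : S.Z | 0 ≤ θ} ≤ P := by
      rw [Submodule.span_le]
      intro x hx
      exact ⟨x, 0, hx, le_refl _, by simp⟩
    exact this (by rw [S.pos_spans]; trivial)
  exact hz

lemma wedge_eq_zero_of_pos_zero
    (h : ∀ γ : Fin (S.m + 1) → S.Z, (∀ i, 0 ≤ γ i) → S.wedge γ = 0) :
    S.wedge = 0 := by
  have key : ∀ k : ℕ, ∀ θ : Fin (S.m + 1) → S.Z,
      (∀ i : Fin (S.m + 1), k ≤ (i : ℕ) → 0 ≤ θ i) → S.wedge θ = 0 := by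
    intro k
    induction k with
    | zero => exact fun θ hθ => h θ fun i => hθ i (Nat.zero_le _)
    | succ k ih =>
      intro θ hθ
      by_cases hk : k < S.m + 1
      · set i : Fin (S.m + 1) := ⟨k, hk⟩ with hi
        obtain ⟨a, b, ha, hb, hab⟩ := S.exists_sub (θ i)
        have hupdate : ∀ c : S.Z, 0 ≤ c →
            S.wedge (Function.update θ i c) = 0 := by
          intro c hc
          apply ih
          intro j hj
          by_cases hji : j = i
          · subst hji; simpa using hc
          · rw [Function.update_of_ne hji]
            refine hθ j ?_
            have : (j : ℕ) ≠ k := fun hjk => hji (Fin.ext (by simp [hi, hjk]))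
            omega
        have hsplit : S.wedge θ =
            S.wedge (Function.update θ i a) - S.wedge (Function.update θ i b) := by
          conv_lhs => rw [← Function.update_eq_self i θ, hab]
          exact S.wedge.map_update_sub θ i a b
        rw [hsplit, hupdate a ha, hupdate b hb, sub_zero]
      · apply ih
        intro j hj
        exact absurd hj (by have := j.isLt; omega)
  ext θ f
  rw [key (S.m + 1) θ (fun i hi => absurd hi (by have := i.isLt; omega))]
  simp

lemma exists_pos_tuple :
    ∃ γ : Fin (S.m + 1) → S.Z, (∀ i, 0 ≤ γ i) ∧ 0 < S.wedge γ S.one := by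
  by_contra hcon
  push_neg at hcon
  apply S.wedge_ne
  apply S.wedge_eq_zero_of_pos_zero
  intro γ hγ
  have h1 : S.wedge γ S.one = 0 :=
    le_antisymm (hcon γ hγ) (S.wedge_pos γ hγ S.one S.one_nonneg)
  have hb : ∀ f : C(S.X, ℝ), S.wedge γ f ≤ 0 := by
    intro f
    have h2 : (0 : C(S.X, ℝ)) ≤ ‖f‖ • S.one - f := by
      rw [ContinuousMap.le_def]
      intro x
      have := f.norm_coe_le_norm x
      have hfx : f x ≤ ‖f‖ := le_trans (le_abs_self _) this
      simp [PPSetup.one]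
      linarith
    have h3 := S.wedge_pos γ hγ _ h2
    rw [map_sub, map_smul] at h3
    have : S.wedge γ f ≤ ‖f‖ • S.wedge γ S.one := by linarith
    rw [h1] at this
    simpa using this
  ext f
  have h4 := hb f
  have h5 := hb (-f)
  rw [map_neg] at h5
  have : S.wedge γ f = 0 := le_antisymm h4 (by linarith)
  simpa using this

lemma wedge_ddc_cons (η : Fin S.m → S.Z) (φ : S.D) :
    S.wedge (Fin.cons (S.ddc φ) η) S.one = 0 := by
  have h := S.hodge_symm η (S.constD 1) φ
  have hone : ((S.constD 1 : S.D) : C(S.X, ℝ)) = S.one := rfl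
  rw [hone] at h
  have hddc : S.ddc (S.constD 1) = 0 := S.ddc_const 1
  rw [h, hddc]
  have : S.wedge (Fin.cons (0 : S.Z) η) = 0 :=
    S.wedge.map_coord_zero 0 (by simp)
  rw [this]
  simp

lemma wedge_ddc_slot (τ : Fin (S.m + 1) → S.Z) (i : Fin (S.m + 1)) (φ : S.D)
    (hτ : τ i = S.ddc φ) : S.wedge τ S.one = 0 := by
  have hs := S.wedge_symm (Equiv.swap 0 i) τ
  rw [← hs]
  have h0 : (τ ∘ (Equiv.swap 0 i)) 0 = S.ddc φ := by
    simp [Function.comp, Equiv.swap_apply_left, hτ]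
  rw [← Fin.cons_self_tail (τ ∘ (Equiv.swap 0 i)), h0]
  exact S.wedge_ddc_cons _ φ

lemma wedge_cls_invariant (θ θ' : Fin (S.m + 1) → S.Z)
    (h : ∀ i, S.cls (θ i) = S.cls (θ' i)) :
    S.wedge θ S.one = S.wedge θ' S.one := by
  have key : ∀ s : Finset (Fin (S.m + 1)),
      S.wedge (fun i => if i ∈ s then θ' i else θ i) S.one = S.wedge θ S.one := by
    intro s
    induction s using Finset.induction with
    | empty => simp
    | @insert a s ha ih =>
      set base : Fin (S.m + 1) → S.Z := fun i => if i ∈ s then θ' i else θ i with hbase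
      have heq : (fun i => if i ∈ insert a s then θ' i else θ i)
          = Function.update base a (θ' a) := by
        funext i
        by_cases hi : i = a
        · subst hi; simp [Function.update_self, hbase]
        · simp [Function.update_of_ne hi, hbase, Finset.mem_insert, hi]
      rw [heq]
      obtain ⟨φ, hφ⟩ : θ' a - θ a ∈ LinearMap.range S.ddc := by
        have hc := h a
        rw [PPSetup.cls, PPSetup.cls, Submodule.Quotient.eq] at hc
        have := (LinearMap.range S.ddc).neg_mem hc
        rwa [neg_sub] at this
      have hba : base a = θ a := by simp [hbase, ha]
      have hsub := S.wedge.map_update_sub base a (θ' a) (θ a)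
      have hz : S.wedge (Function.update base a (θ' a - θ a)) S.one = 0 := by
        apply S.wedge_ddc_slot _ a φ
        rw [Function.update_self, hφ]
      have hev := LinearMap.congr_fun hsub S.one
      rw [LinearMap.sub_apply] at hev
      rw [hz] at hev
      have : S.wedge (Function.update base a (θ' a)) S.one
          = S.wedge (Function.update base a (θ a)) S.one := by linarith
      rw [this, ← hba, Function.update_eq_self]
      exact ih
  have huniv := key Finset.univ
  simp only [Finset.mem_univ, if_true] at huniv
  exact huniv.symm

end PPSetup

/-- For all classes α₁,…,αₙ ∈ Pos(X), the intersection number α₁⋯αₙ is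
strictly positive. Expressed via representatives: if θ₁,…,θₙ ∈ 𝒵 have classes in Pos(X), then
∫ θ₁∧⋯∧θₙ > 0. -/
theorem statement0 (S : PPSetup) (θ : Fin (S.m + 1) → S.Z)
    (hθ : ∀ i, S.cls (θ i) ∈ S.Pos) :
    0 < S.wedge θ S.one := by
  obtain ⟨γ, hγpos, hγ⟩ := S.exists_pos_tuple
  -- each class dominates a small positive multiple of γ i
  have hrep : ∀ i, ∃ ε : ℝ, 0 < ε ∧ ∃ ρ : S.Z, 0 ≤ ρ ∧
      S.cls (θ i) = S.cls (ε • γ i + ρ) := by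
    intro i
    obtain ⟨ε, hε, hmem⟩ := hθ i (S.cls (γ i))
    obtain ⟨ρ, hρ, hcls⟩ := hmem (-ε) (by rw [abs_neg, abs_of_pos hε])
    refine ⟨ε, hε, ρ, hρ, ?_⟩
    have : S.cls (ε • γ i + ρ) = ε • S.cls (γ i) + S.cls ρ := by
      simp [PPSetup.cls, Submodule.Quotient.mk_add, Submodule.Quotient.mk_smul]
    rw [this, hcls]
    module
  choose ε hε ρ hρ hcls using hrep
  set θ' : Fin (S.m + 1) → S.Z := fun i => ε i • γ i + ρ i with hθ'
  rw [S.wedge_cls_invariant θ θ' hcls]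
  -- expand multilinearly
  have hpi : θ' = (fun i => ε i • γ i) + ρ := rfl
  have hexp := S.wedge.map_add_univ (fun i => ε i • γ i) ρ
  rw [← hpi] at hexp
  have hev := LinearMap.congr_fun hexp S.one
  rw [LinearMap.sum_apply] at hev
  rw [hev]
  have hterm : ∀ s : Finset (Fin (S.m + 1)),
      0 ≤ S.wedge (s.piecewise (fun i => ε i • γ i) ρ) S.one := by
    intro s
    refine S.wedge_pos _ ?_ _ S.one_nonneg
    intro i
    by_cases hi : i ∈ s
    · rw [Finset.piecewise_eq_of_mem _ _ _ hi]
      exact smul_nonneg (hε i).le (hγpos i)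
    · rw [Finset.piecewise_eq_of_notMem _ _ _ hi]
      exact hρ i
  have huniv : S.wedge (Finset.univ.piecewise (fun i => ε i • γ i) ρ) S.one
      = (∏ i, ε i) * S.wedge γ S.one := by
    rw [Finset.piecewise_univ, S.wedge.map_smul_univ ε γ]
    simp
  have hprod : 0 < ∏ i, ε i := Finset.prod_pos fun i _ => hε i
  have hlast : 0 < (∏ i, ε i) * S.wedge γ S.one := mul_pos hprod hγ
  calc (0 : ℝ) < S.wedge (Finset.univ.piecewise (fun i => ε i • γ i) ρ) S.one := by
        rw [huniv]; exact hlast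
    _ ≤ ∑ s : Finset (Fin (S.m + 1)),
          S.wedge (s.piecewise (fun i => ε i • γ i) ρ) S.one :=
        Finset.single_le_sum (fun s _ => hterm s) (Finset.mem_univ _)
end
end

section
/- In the synthetic setup, there is a constant Cₙ > 0 depending only on n with the following property. Let ω₀,…,ωₙ ∈ 𝒵₊ be pairwise commensurable, set δ := max_{i,j} d_T(ωᵢ,ω_j), and let φᵢ ∈ 𝒟_{ωᵢ} satisfy φᵢ ≤ 0 for i = 0,…,n. Then 0 ≥ (ω₀,φ₀)⋯(ωₙ,φₙ) ≥ Cₙ·e^{Cₙδ}·min_i (ωᵢ,φᵢ)^{n+1} (where each (ωᵢ,φᵢ)^{n+1} ≤ 0). -/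
open scoped BigOperators
noncomputable section

namespace PPSetup

/-- auxiliary doubly-exponentially decreasing sequence -/
def epsAux : ℕ → ℝ
  | 0 => 1/2
  | j+1 => (epsAux j)^2/3

lemma epsAux_pos : ∀ j, 0 < epsAux j
  | 0 => by norm_num [epsAux]
  | j+1 => by
      have := epsAux_pos j
      simp only [epsAux]; positivity

lemma epsAux_le_half : ∀ j, epsAux j ≤ 1/2
  | 0 => le_refl _
  | j+1 => by
      have h := epsAux_pos j
      have h2 := epsAux_le_half j
      simp only [epsAux]
      nlinarith

lemma epsAux_succ_le (j : ℕ) : epsAux (j+1) ≤ epsAux j := by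
  have h := epsAux_pos j
  have h2 := epsAux_le_half j
  simp only [epsAux]
  nlinarith

lemma epsAux_anti : ∀ {j j' : ℕ}, j ≤ j' → epsAux j' ≤ epsAux j := by
  intro j j' h
  induction h with
  | refl => exact le_refl _
  | step h ih => exact le_trans (epsAux_succ_le _) ih

/-- the constant sequence -/
def ccSeq (n : ℕ) : ℕ → ℝ
  | 0 => 1
  | k+1 => ccSeq n k * (1 + 1/(epsAux (n - (k+1))))

lemma ccSeq_pos (n : ℕ) : ∀ k, 0 < ccSeq n k
  | 0 => one_pos
  | k+1 => by
      have := ccSeq_pos n k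
      have := epsAux_pos (n - (k+1))
      simp only [ccSeq]
      positivity

lemma ccSeq_le_succ (n k : ℕ) : ccSeq n k ≤ ccSeq n (k+1) := by
  have h1 := ccSeq_pos n k
  have h2 := epsAux_pos (n - (k+1))
  have : (0:ℝ) ≤ 1/(epsAux (n - (k+1))) := by positivity
  calc ccSeq n k = ccSeq n k * 1 := (mul_one _).symm
  _ ≤ ccSeq n k * (1 + 1/(epsAux (n - (k+1)))) := by
      apply mul_le_mul_of_nonneg_left (by linarith) (le_of_lt h1)
  _ = ccSeq n (k+1) := rfl

variable {S : PPSetup}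

lemma wedge_cons_add (Θ : Fin S.m → S.Z) (a b : S.Z) :
    S.wedge (Fin.cons (a + b) Θ) = S.wedge (Fin.cons a Θ) + S.wedge (Fin.cons b Θ) := by
  have h := S.wedge.map_update_add (Fin.cons a Θ) 0 a b
  rwa [Fin.update_cons_zero, Fin.update_cons_zero, Fin.update_cons_zero] at h

lemma wedge_cons_smul (Θ : Fin S.m → S.Z) (t : ℝ) (a : S.Z) :
    S.wedge (Fin.cons (t • a) Θ) = t • S.wedge (Fin.cons a Θ) := by
  have h := S.wedge.map_update_smul (Fin.cons a Θ) 0 t a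
  rwa [Fin.update_cons_zero, Fin.update_cons_zero] at h

lemma wedge_nonpos (θ : Fin (S.m+1) → S.Z) (hθ : ∀ j, 0 ≤ θ j) (f : C(S.X, ℝ))
    (hf : f ≤ 0) : S.wedge θ f ≤ 0 := by
  have h := S.wedge_pos θ hθ (-f) (by simpa using neg_nonneg.mpr hf)
  rw [map_neg] at h
  linarith

end PPSetup
namespace PPSetup

variable {S : PPSetup}

lemma wedge_mono (s s' : Fin (S.m+1) → S.Z) (hs : ∀ j, 0 ≤ s j) (h : ∀ j, s j ≤ s' j)
    (f : C(S.X, ℝ)) (hf : 0 ≤ f) : S.wedge s f ≤ S.wedge s' f := by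
  classical
  have key : ∀ t : Finset (Fin (S.m+1)), S.wedge s f ≤ S.wedge (t.piecewise s' s) f := by
    intro t
    induction t using Finset.induction_on with
    | empty => simp
    | @insert a t ha ih =>
        rw [Finset.piecewise_insert]
        have hPa : t.piecewise s' s a = s a := Finset.piecewise_eq_of_notMem _ _ _ ha
        have hupd : Function.update (t.piecewise s' s) a (s a) = t.piecewise s' s := by
          rw [← hPa]; exact Function.update_eq_self _ _
        have hadd : s' a = s a + (s' a - s a) := by abel
        have h1 := S.wedge.map_update_add (t.piecewise s' s) a (s a) (s' a - s a)
        have h2 : 0 ≤ S.wedge (Function.update (t.piecewise s' s) a (s' a - s a)) f := by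
          apply S.wedge_pos _ _ f hf
          intro j
          by_cases hj : j = a
          · subst hj; rw [Function.update_self]; exact sub_nonneg.mpr (h j)
          · rw [Function.update_of_ne hj]
            by_cases hjt : j ∈ t
            · rw [Finset.piecewise_eq_of_mem _ _ _ hjt]; exact le_trans (hs j) (h j)
            · rw [Finset.piecewise_eq_of_notMem _ _ _ hjt]; exact hs j
        calc S.wedge s f ≤ S.wedge (t.piecewise s' s) f := ih
          _ = S.wedge (Function.update (t.piecewise s' s) a (s a)) f := by rw [hupd]
          _ ≤ S.wedge (Function.update (t.piecewise s' s) a (s a)) f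
              + S.wedge (Function.update (t.piecewise s' s) a (s' a - s a)) f := by linarith
          _ = S.wedge (Function.update (t.piecewise s' s) a (s' a)) f := by
              rw [hadd, h1]; simp
  have := key Finset.univ
  rwa [Finset.piecewise_univ] at this

lemma wedge_sort (α β : S.Z) (s : Finset (Fin (S.m+1))) :
    S.wedge (fun j => if (j:ℕ) < s.card then α else β) =
    S.wedge (fun j => if j ∈ s then α else β) := by
  classical
  have hcard : s.card ≤ S.m+1 := by simpa using Finset.card_le_univ s
  let e1 : {j : Fin (S.m+1) // (j:ℕ) < s.card} ≃ Fin s.card :=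
    { toFun := fun x => ⟨x.1.1, x.2⟩
      invFun := fun k => ⟨⟨k.1, lt_of_lt_of_le k.2 hcard⟩, k.2⟩
      left_inv := fun x => Subtype.ext (Fin.ext rfl)
      right_inv := fun k => rfl }
  let e : {j : Fin (S.m+1) // (j:ℕ) < s.card} ≃ {x // x ∈ s} :=
    e1.trans s.equivFin.symm
  have hmem : ∀ j : Fin (S.m+1), e.extendSubtype j ∈ s ↔ (j:ℕ) < s.card := by
    intro j
    constructor
    · intro hj
      by_contra hlt
      exact Equiv.extendSubtype_not_mem e j hlt hj
    · intro hlt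
      exact Equiv.extendSubtype_mem e j hlt
  have hsym := S.wedge_symm e.extendSubtype (fun j => if j ∈ s then α else β)
  rw [← hsym]
  congr 1
  funext j
  simp only [Function.comp]
  by_cases hj : (j:ℕ) < s.card
  · rw [if_pos ((hmem j).mpr hj), if_pos hj]
  · rw [if_neg (fun c => hj ((hmem j).mp c)), if_neg hj]

lemma psd_key (Θ : Fin S.m → S.Z) (hΘ : ∀ r, 0 ≤ Θ r) (φ ψ : S.D) (t : ℝ) :
    S.wedge (Fin.cons (S.ddc φ) Θ) (φ : C(S.X,ℝ))
      - 2*t*(S.wedge (Fin.cons (S.ddc ψ) Θ) (φ : C(S.X,ℝ)))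
      + t^2 * (S.wedge (Fin.cons (S.ddc ψ) Θ) (ψ : C(S.X,ℝ))) ≤ 0 := by
  have hq := S.hodge_neg Θ hΘ (φ - t • ψ)
  have hdd : S.ddc (φ - t • ψ) = S.ddc φ + (-t) • S.ddc ψ := by
    rw [map_sub, map_smul, neg_smul, ← sub_eq_add_neg]
  have hco : ((φ - t • ψ : S.D) : C(S.X,ℝ)) = (φ:C(S.X,ℝ)) - t • (ψ:C(S.X,ℝ)) := rfl
  rw [hdd, wedge_cons_add, wedge_cons_smul, hco] at hq
  have hsy := S.hodge_symm Θ ψ φ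
  simp only [LinearMap.add_apply, LinearMap.smul_apply, map_sub, map_smul, smul_eq_mul] at hq
  rw [hsy] at hq
  nlinarith [hq]

lemma succAbove_coe_lt {n : ℕ} (i : Fin (n+1)) (j : Fin n) :
    ((i.succAbove j : Fin (n+1)) : ℕ) < (i:ℕ) ↔ (j:ℕ) < (i:ℕ) := by
  rcases lt_or_ge (j:ℕ) (i:ℕ) with h | h
  · rw [Fin.succAbove_of_castSucc_lt _ _ (by simpa [Fin.lt_def] using h)]
    simpa using h
  · rw [Fin.succAbove_of_le_castSucc _ _ (by simpa [Fin.le_def] using h)]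
    simp [Fin.val_succ]
    omega

lemma epow_eq_sum (ω : S.Z) (φ : S.D) :
    S.epow ω φ = ∑ i : Fin (S.m+2),
      S.wedge (fun j => if (j:ℕ) < (i:ℕ) then ω else ω + S.ddc φ) (φ : C(S.X,ℝ)) := by
  unfold epow epair
  apply Finset.sum_congr rfl
  intro i _
  have hfe : (fun j : Fin (S.m+1) =>
      if ((i.succAbove j : Fin (S.m+2)) : ℕ) < (i : ℕ) then ((fun _ => (ω, φ)) (i.succAbove j)).1
      else ((fun _ => (ω, φ)) (i.succAbove j)).1 + S.ddc ((fun _ => (ω, φ)) (i.succAbove j)).2)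
      = (fun j : Fin (S.m+1) => if (j:ℕ) < (i:ℕ) then ω else ω + S.ddc φ) := by
    funext j
    by_cases h : (j:ℕ) < (i:ℕ)
    · rw [if_pos ((succAbove_coe_lt i j).mpr h), if_pos h]
    · rw [if_neg (fun c => h ((succAbove_coe_lt i j).mp c)), if_neg h]
  rw [hfe]

lemma epow_nonpos (ω : S.Z) (φ : S.D) (hω : 0 ≤ ω) (hpsh : 0 ≤ ω + S.ddc φ)
    (hφ : (φ:C(S.X,ℝ)) ≤ 0) : S.epow ω φ ≤ 0 := by
  rw [epow_eq_sum]
  apply Finset.sum_nonpos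
  intro i _
  apply wedge_nonpos _ _ _ hφ
  intro j
  by_cases h : (j:ℕ) < (i:ℕ)
  · rw [if_pos h]; exact hω
  · rw [if_neg h]; exact hpsh

lemma pure_le_neg_epow (ω : S.Z) (φ : S.D) (hω : 0 ≤ ω) (hpsh : 0 ≤ ω + S.ddc φ)
    (hφ : (φ:C(S.X,ℝ)) ≤ 0) (s : Finset (Fin (S.m+1))) :
    -(S.wedge (fun j => if j ∈ s then ω else ω + S.ddc φ) (φ:C(S.X,ℝ))) ≤ -S.epow ω φ := by
  rw [← wedge_sort]
  have hterm : ∀ i : Fin (S.m+2), 0 ≤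
      -(S.wedge (fun j => if (j:ℕ) < (i:ℕ) then ω else ω + S.ddc φ) (φ:C(S.X,ℝ))) := by
    intro i
    rw [neg_nonneg]
    apply wedge_nonpos _ _ _ hφ
    intro j
    by_cases h : (j:ℕ) < (i:ℕ)
    · rw [if_pos h]; exact hω
    · rw [if_neg h]; exact hpsh
  have h2 : -S.epow ω φ = ∑ i : Fin (S.m+2),
      -(S.wedge (fun j => if (j:ℕ) < (i:ℕ) then ω else ω + S.ddc φ) (φ:C(S.X,ℝ))) := by
    rw [epow_eq_sum (S := S) ω φ, Finset.sum_neg_distrib]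
  rw [h2]
  have hlt : s.card < S.m+2 := by
    have := Finset.card_le_univ s
    simp at this
    omega
  exact Finset.single_le_sum (f := fun i : Fin (S.m+2) =>
      -(S.wedge (fun j => if (j:ℕ) < (i:ℕ) then ω else ω + S.ddc φ) (φ:C(S.X,ℝ))))
    (fun i _ => hterm i) (Finset.mem_univ (⟨s.card, hlt⟩ : Fin (S.m+2)))

end PPSetup
namespace PPSetup

variable {S : PPSetup}

lemma smul_le_smul_right' {a b : ℝ} (h : a ≤ b) {x : S.Z} (hx : 0 ≤ x) :
    a • x ≤ b • x :=
  sub_nonneg.mp (by rw [← sub_smul]; exact smul_nonneg (sub_nonneg.mpr h) hx)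

lemma le_exp_smul_of_dT_le (ω ω' : S.Z) (hω : 0 ≤ ω) (hcom : S.commensurable ω ω')
    (δ : ℝ) (hdT : S.dT ω ω' ≤ δ) : ω' ≤ Real.exp δ • ω := by
  classical
  set A := {δ' : ℝ | 0 ≤ δ' ∧ Real.exp (-δ') • ω ≤ ω' ∧ ω' ≤ Real.exp δ' • ω} with hA
  have hne : A.Nonempty := hcom
  have hup : ∀ δ₁ ∈ A, ∀ δ₂, δ₁ ≤ δ₂ → δ₂ ∈ A := by
    intro δ₁ h1 δ₂ h12
    refine ⟨le_trans h1.1 h12, le_trans ?_ h1.2.1, le_trans h1.2.2 ?_⟩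
    · exact smul_le_smul_right' (Real.exp_le_exp.mpr (by linarith)) hω
    · exact smul_le_smul_right' (Real.exp_le_exp.mpr h12) hω
  have hmem : ∀ η : ℝ, 0 < η → ω' ≤ Real.exp (δ + η) • ω := by
    intro η hη
    have hlt : sInf A < δ + η := lt_of_le_of_lt hdT (by linarith)
    obtain ⟨δ₁, hδ₁A, hδ₁lt⟩ := exists_lt_of_csInf_lt hne hlt
    exact (hup δ₁ hδ₁A (δ + η) (le_of_lt hδ₁lt)).2.2
  -- closedness argument
  let u : (Fin 2 → ℝ) →ₗ[ℝ] S.Z :=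
    (LinearMap.proj 0).smulRight ω + (LinearMap.proj 1).smulRight ω'
  have hu : ∀ a b : ℝ, u ![a, b] = a • ω + b • ω' := by
    intro a b
    simp [u, LinearMap.smulRight_apply, LinearMap.proj_apply]
  have hcl := S.pos_closed 2 u
  have hseq : Filter.Tendsto
      (fun k : ℕ => (![Real.exp (δ + 1/((k:ℝ)+1)), -1] : Fin 2 → ℝ))
      Filter.atTop (nhds ![Real.exp δ, -1]) := by
    rw [tendsto_pi_nhds]
    intro i
    fin_cases i
    · simp only [Matrix.cons_val_zero]
      have h1 : Filter.Tendsto (fun k : ℕ => δ + 1/((k:ℝ)+1)) Filter.atTop (nhds (δ + 0)) :=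
        Filter.Tendsto.const_add _ tendsto_one_div_add_atTop_nhds_zero_nat
      rw [add_zero] at h1
      exact (Real.continuous_exp.tendsto δ).comp h1
    · simp only [Matrix.cons_val_one, Matrix.head_cons]
      exact tendsto_const_nhds
  have hmemC : ∀ k : ℕ, (![Real.exp (δ + 1/((k:ℝ)+1)), -1] : Fin 2 → ℝ) ∈ {x | 0 ≤ u x} := by
    intro k
    have hpos : (0:ℝ) < 1/((k:ℝ)+1) := by positivity
    have := hmem _ hpos
    simp only [Set.mem_setOf_eq, hu]
    rw [neg_one_smul, ← sub_eq_add_neg, sub_nonneg]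
    exact this
  have hlim := hcl.mem_of_tendsto hseq (Filter.Eventually.of_forall hmemC)
  simp only [Set.mem_setOf_eq, hu] at hlim
  rw [neg_one_smul, ← sub_eq_add_neg, sub_nonneg] at hlim
  exact hlim

variable (S)

/-- the slot forms -/
def formZ (Ω : S.Z) (Φ : Fin (S.m+2) → S.D) : Option (Fin (S.m+2)) → S.Z
  | none => Ω
  | some l => Ω + S.ddc (Φ l)

/-- the mixed energy terms -/
def Tq (Ω : S.Z) (Φ : Fin (S.m+2) → S.D) (i : Fin (S.m+2))
    (o : Fin (S.m+1) → Option (Fin (S.m+2))) : ℝ :=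
  -(S.wedge (fun j => S.formZ Ω Φ (o j)) ((Φ i : C(S.X,ℝ))))

/-- max of all mixed energy terms -/
noncomputable def Fq (Ω : S.Z) (Φ : Fin (S.m+2) → S.D) : ℝ :=
  Finset.univ.sup' Finset.univ_nonempty
    (fun p : Fin (S.m+2) × (Fin (S.m+1) → Option (Fin (S.m+2))) => S.Tq Ω Φ p.1 p.2)

/-- max of diagonal energies -/
noncomputable def Eq' (Ω : S.Z) (Φ : Fin (S.m+2) → S.D) : ℝ :=
  Finset.univ.sup' Finset.univ_nonempty (fun j : Fin (S.m+2) => -S.epow Ω (Φ j))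

/-- the number of foreign slots -/
def forC (i : Fin (S.m+2)) (o : Fin (S.m+1) → Option (Fin (S.m+2))) : ℕ :=
  (Finset.univ.filter (fun j => ∃ l, o j = some l ∧ l ≠ i)).card

variable {S}

section hyps

variable {Ω : S.Z} {Φ : Fin (S.m+2) → S.D}

lemma formZ_nonneg (hΩ : 0 ≤ Ω) (hpsh : ∀ l, 0 ≤ Ω + S.ddc (Φ l)) (x : Option (Fin (S.m+2))) : 0 ≤ S.formZ Ω Φ x := by
  cases x with
  | none => exact hΩ
  | some l => exact hpsh l

lemma Tq_nonneg (hΩ : 0 ≤ Ω) (hpsh : ∀ l, 0 ≤ Ω + S.ddc (Φ l))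
    (hneg : ∀ l, (Φ l : C(S.X,ℝ)) ≤ 0) (i : Fin (S.m+2)) (o : Fin (S.m+1) → Option (Fin (S.m+2))) :
    0 ≤ S.Tq Ω Φ i o := by
  rw [Tq, neg_nonneg]
  exact wedge_nonpos _ (fun j => formZ_nonneg hΩ hpsh _) _ (hneg i)

lemma Tq_le_Fq (i : Fin (S.m+2)) (o : Fin (S.m+1) → Option (Fin (S.m+2))) :
    S.Tq Ω Φ i o ≤ S.Fq Ω Φ :=
  Finset.le_sup' (f := fun p : Fin (S.m+2) × (Fin (S.m+1) → Option (Fin (S.m+2))) =>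
    S.Tq Ω Φ p.1 p.2) (Finset.mem_univ (i, o))

lemma Fq_nonneg (hΩ : 0 ≤ Ω) (hpsh : ∀ l, 0 ≤ Ω + S.ddc (Φ l))
    (hneg : ∀ l, (Φ l : C(S.X,ℝ)) ≤ 0) : 0 ≤ S.Fq Ω Φ :=
  le_trans (Tq_nonneg hΩ hpsh hneg 0 (fun _ => none)) (Tq_le_Fq _ _)

lemma neg_epow_le_Eq' (j : Fin (S.m+2)) : -S.epow Ω (Φ j) ≤ S.Eq' Ω Φ :=
  Finset.le_sup' (f := fun j : Fin (S.m+2) => -S.epow Ω (Φ j)) (Finset.mem_univ j)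

lemma Eq'_nonneg (hΩ : 0 ≤ Ω) (hpsh : ∀ l, 0 ≤ Ω + S.ddc (Φ l))
    (hneg : ∀ l, (Φ l : C(S.X,ℝ)) ≤ 0) : 0 ≤ S.Eq' Ω Φ := by
  refine le_trans ?_ (neg_epow_le_Eq' 0)
  rw [neg_nonneg]
  exact epow_nonpos _ _ hΩ (hpsh 0) (hneg 0)

end hyps

end PPSetup
namespace PPSetup

variable {S : PPSetup}

lemma epsAux_succ (j : ℕ) : epsAux (j+1) = (epsAux j)^2/3 := rfl

lemma ccSeq_succ (n k : ℕ) : ccSeq n (k+1) = ccSeq n k * (1 + 1/(epsAux (n-(k+1)))) := rfl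

lemma forC_update {i : Fin (S.m+2)} {o : Fin (S.m+1) → Option (Fin (S.m+2))}
    {j₀ : Fin (S.m+1)} {x : Option (Fin (S.m+2))} (hx : ∀ l', x = some l' → l' = i)
    (hj : ∃ l, o j₀ = some l ∧ l ≠ i) :
    S.forC i (Function.update o j₀ x) + 1 ≤ S.forC i o := by
  unfold forC
  have hmem : j₀ ∈ Finset.univ.filter (fun j => ∃ l, o j = some l ∧ l ≠ i) :=
    Finset.mem_filter.mpr ⟨Finset.mem_univ _, hj⟩
  have hset : Finset.univ.filter (fun j => ∃ l, Function.update o j₀ x j = some l ∧ l ≠ i)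
      = (Finset.univ.filter (fun j => ∃ l, o j = some l ∧ l ≠ i)).erase j₀ := by
    ext a
    rw [Finset.mem_erase, Finset.mem_filter, Finset.mem_filter]
    constructor
    · rintro ⟨-, l', hup, hne⟩
      by_cases ha : a = j₀
      · subst ha
        rw [Function.update_self] at hup
        exact absurd (hx l' hup) hne
      · rw [Function.update_of_ne ha] at hup
        exact ⟨ha, Finset.mem_univ _, l', hup, hne⟩
    · rintro ⟨ha, -, l', hal, hne⟩
      refine ⟨Finset.mem_univ _, l', ?_, hne⟩
      rw [Function.update_of_ne ha]
      exact hal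
  rw [hset, Finset.card_erase_of_mem hmem]
  have := Finset.card_pos.mpr ⟨j₀, hmem⟩
  omega

lemma step_bound {Ω : S.Z} {Φ : Fin (S.m+2) → S.D}
    (hΩ : 0 ≤ Ω) (hpsh : ∀ l, 0 ≤ Ω + S.ddc (Φ l)) (hneg : ∀ l, (Φ l : C(S.X,ℝ)) ≤ 0)
    (i l : Fin (S.m+2)) (o : Fin (S.m+1) → Option (Fin (S.m+2)))
    (j₀ : Fin (S.m+1)) (hol : o j₀ = some l) (t : ℝ) (ht : 0 < t) :
    S.Tq Ω Φ i o ≤ S.Tq Ω Φ i (Function.update o j₀ none)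
      + (1/(2*t)) * S.Tq Ω Φ i (Function.update o j₀ (some i))
      + (t/2) * S.Tq Ω Φ l o := by
  classical
  set T : Fin S.m → S.Z :=
    Fin.tail ((fun j => S.formZ Ω Φ (o j)) ∘ (Equiv.swap 0 j₀)) with hT
  have hswap0 : Equiv.swap 0 j₀ 0 = j₀ := Equiv.swap_apply_left 0 j₀
  have hTpos : ∀ r, 0 ≤ T r := by
    intro r
    rw [hT]
    exact formZ_nonneg hΩ hpsh _
  have hconv : ∀ x : Option (Fin (S.m+2)),
      ((fun j => S.formZ Ω Φ (Function.update o j₀ x j)) ∘ (Equiv.swap 0 j₀)) =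
        Fin.cons (S.formZ Ω Φ x) T := by
    intro x
    funext r
    refine Fin.cases ?_ ?_ r
    · simp only [Function.comp_apply, Fin.cons_zero]
      rw [hswap0, Function.update_self]
    · intro r'
      have hne0 : Equiv.swap 0 j₀ r'.succ ≠ j₀ := by
        intro hc
        have h2 : r'.succ = (0 : Fin (S.m+1)) :=
          (Equiv.swap 0 j₀).injective (hc.trans hswap0.symm)
        exact Fin.succ_ne_zero r' h2
      simp only [Function.comp_apply, Fin.cons_succ, hT, Fin.tail]
      rw [Function.update_of_ne hne0]
  have hTx : ∀ (i' : Fin (S.m+2)) (x : Option (Fin (S.m+2))),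
      S.Tq Ω Φ i' (Function.update o j₀ x) =
        -(S.wedge (Fin.cons (S.formZ Ω Φ x) T) ((Φ i' : C(S.X,ℝ)))) := by
    intro i' x
    rw [Tq]
    have h1 : S.wedge (fun j => S.formZ Ω Φ (Function.update o j₀ x j)) =
        S.wedge (Fin.cons (S.formZ Ω Φ x) T) := by
      rw [← hconv x]
      exact (S.wedge_symm _ _).symm
    rw [h1]
  have hoeq : Function.update o j₀ (some l) = o := by
    rw [← hol]; exact Function.update_eq_self _ _
  have hTo : ∀ i' : Fin (S.m+2), S.Tq Ω Φ i' o =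
      -(S.wedge (Fin.cons (Ω + S.ddc (Φ l)) T) ((Φ i' : C(S.X,ℝ)))) := by
    intro i'
    have := hTx i' (some l)
    rwa [hoeq] at this
  rw [hTo i, hTo l, hTx i none, hTx i (some i)]
  show -(S.wedge (Fin.cons (Ω + S.ddc (Φ l)) T) ((Φ i : C(S.X,ℝ)))) ≤
    -(S.wedge (Fin.cons Ω T) ((Φ i : C(S.X,ℝ))))
    + (1/(2*t)) * (-(S.wedge (Fin.cons (Ω + S.ddc (Φ i)) T) ((Φ i : C(S.X,ℝ)))))
    + (t/2) * (-(S.wedge (Fin.cons (Ω + S.ddc (Φ l)) T) ((Φ l : C(S.X,ℝ)))))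
  have hsplit_l := wedge_cons_add (S := S) T Ω (S.ddc (Φ l))
  have hsplit_i := wedge_cons_add (S := S) T Ω (S.ddc (Φ i))
  have hpsd := psd_key T hTpos (Φ i) (Φ l) t
  have ha_i : S.wedge (Fin.cons Ω T) ((Φ i : C(S.X,ℝ))) ≤ 0 :=
    wedge_nonpos _ (fun r => Fin.cases hΩ hTpos r) _ (hneg i)
  have ha_l : S.wedge (Fin.cons Ω T) ((Φ l : C(S.X,ℝ))) ≤ 0 :=
    wedge_nonpos _ (fun r => Fin.cases hΩ hTpos r) _ (hneg l)
  rw [hsplit_l, hsplit_i]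
  simp only [LinearMap.add_apply]
  set a := S.wedge (Fin.cons Ω T) ((Φ i : C(S.X,ℝ))) with haa
  set al := S.wedge (Fin.cons Ω T) ((Φ l : C(S.X,ℝ))) with hal2
  set A := S.wedge (Fin.cons (S.ddc (Φ i)) T) ((Φ i : C(S.X,ℝ))) with hA
  set Bi := S.wedge (Fin.cons (S.ddc (Φ l)) T) ((Φ i : C(S.X,ℝ))) with hBi
  set Bl := S.wedge (Fin.cons (S.ddc (Φ l)) T) ((Φ l : C(S.X,ℝ))) with hBl
  -- hpsd : A - 2*t*Bi + t^2*Bl ≤ 0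
  have h1 : 2*t*(-Bi) ≤ (-A) + t^2*(-Bl) := by nlinarith [hpsd]
  have h2 : -Bi = (1/(2*t)) * (2*t*(-Bi)) := by field_simp
  have key2 : -Bi ≤ (1/(2*t))*(-A) + (t/2)*(-Bl) := by
    rw [h2]
    calc (1/(2*t)) * (2*t*(-Bi)) ≤ (1/(2*t)) * ((-A) + t^2*(-Bl)) :=
          mul_le_mul_of_nonneg_left h1 (by positivity)
      _ = (1/(2*t))*(-A) + (t/2)*(-Bl) := by field_simp
  have key3 : -Bi ≤ (1/(2*t))*(-(a+A)) + (t/2)*(-(al+Bl)) := by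
    refine le_trans key2 (add_le_add ?_ ?_)
    · exact mul_le_mul_of_nonneg_left (by linarith) (by positivity)
    · exact mul_le_mul_of_nonneg_left (by linarith) (by positivity)
  linarith [key3]

lemma claim_ind {Ω : S.Z} {Φ : Fin (S.m+2) → S.D}
    (hΩ : 0 ≤ Ω) (hpsh : ∀ l, 0 ≤ Ω + S.ddc (Φ l)) (hneg : ∀ l, (Φ l : C(S.X,ℝ)) ≤ 0) :
    ∀ k : ℕ, k ≤ S.m+1 →
      ∀ (i : Fin (S.m+2)) (o : Fin (S.m+1) → Option (Fin (S.m+2))),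
        S.forC i o ≤ k →
        S.Tq Ω Φ i o ≤ ccSeq (S.m+1) k * S.Eq' Ω Φ + epsAux (S.m+1-k) * S.Fq Ω Φ := by
  intro k
  induction k with
  | zero =>
    intro _ i o h0
    have hfil : Finset.univ.filter (fun j => ∃ l, o j = some l ∧ l ≠ i) = ∅ := by
      have : S.forC i o = 0 := Nat.le_zero.mp h0
      unfold forC at this
      exact Finset.card_eq_zero.mp this
    have hfe : (fun j => S.formZ Ω Φ (o j)) =
        (fun j => if j ∈ Finset.univ.filter (fun j' => o j' = none) then Ω
          else Ω + S.ddc (Φ i)) := by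
      funext j
      have hnofor : ¬ (∃ l, o j = some l ∧ l ≠ i) := by
        intro hex
        have hjmem : j ∈ Finset.univ.filter (fun j => ∃ l, o j = some l ∧ l ≠ i) :=
          Finset.mem_filter.mpr ⟨Finset.mem_univ _, hex⟩
        rw [hfil] at hjmem
        exact absurd hjmem (Finset.notMem_empty j)
      cases hoj : o j with
      | none =>
        have hjs : j ∈ Finset.univ.filter (fun j' => o j' = none) :=
          Finset.mem_filter.mpr ⟨Finset.mem_univ _, hoj⟩
        rw [if_pos hjs]
        rfl
      | some l =>
        have hl : l = i := by
          by_contra hne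
          exact hnofor ⟨l, hoj, hne⟩
        have hjns : j ∉ Finset.univ.filter (fun j' => o j' = none) := by
          intro hmem
          have := (Finset.mem_filter.mp hmem).2
          rw [hoj] at this
          exact Option.some_ne_none _ this
        rw [if_neg hjns, hl]
        rfl
    have h1 : S.Tq Ω Φ i o ≤ -S.epow Ω (Φ i) := by
      rw [Tq, hfe]
      exact pure_le_neg_epow Ω (Φ i) hΩ (hpsh i) (hneg i) _
    have h2 := neg_epow_le_Eq' (S := S) (Ω := Ω) (Φ := Φ) i
    have h3 : 0 ≤ epsAux (S.m+1-0) * S.Fq Ω Φ :=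
      mul_nonneg (le_of_lt (epsAux_pos _)) (Fq_nonneg hΩ hpsh hneg)
    have h4 : ccSeq (S.m+1) 0 = 1 := rfl
    rw [h4, one_mul]
    linarith
  | succ k IH =>
    intro hk1 i o hfor
    by_cases hc : S.forC i o ≤ k
    · have hkle : k ≤ S.m+1 := by omega
      have h1 := IH hkle i o hc
      have hcc := ccSeq_le_succ (S.m+1) k
      have heps : epsAux (S.m+1-k) ≤ epsAux (S.m+1-(k+1)) := epsAux_anti (by omega)
      have hE := Eq'_nonneg hΩ hpsh hneg
      have hF := Fq_nonneg hΩ hpsh hneg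
      refine le_trans h1 (add_le_add ?_ ?_)
      · exact mul_le_mul_of_nonneg_right hcc hE
      · exact mul_le_mul_of_nonneg_right heps hF
    · -- main case
      have hne : (Finset.univ.filter
          (fun j => ∃ l, o j = some l ∧ l ≠ i)).Nonempty := by
        rw [← Finset.card_pos]
        have : k + 1 ≤ S.forC i o := by omega
        unfold forC at this
        omega
      obtain ⟨j₀, hj₀⟩ := hne
      obtain ⟨l, hol, hli⟩ := (Finset.mem_filter.mp hj₀).2
      have hex : ∃ l', o j₀ = some l' ∧ l' ≠ i := ⟨l, hol, hli⟩
      set ε' : ℝ := epsAux (S.m+1-(k+1)) with hε'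
      have hεp : 0 < ε' := epsAux_pos _
      have hεle : ε' ≤ 1/2 := epsAux_le_half _
      have hrel : epsAux (S.m+1-k) = ε'^2/3 := by
        have hs : S.m+1-k = (S.m+1-(k+1))+1 := by omega
        rw [hs, epsAux_succ, hε']
      have hstep := step_bound hΩ hpsh hneg i l o j₀ hol (ε'/2) (by linarith)
      have hfor1 : S.forC i (Function.update o j₀ none) ≤ k := by
        have := forC_update (i := i) (o := o) (j₀ := j₀) (x := none)
          (fun l' h => by simp at h) hex
        omega
      have hfor2 : S.forC i (Function.update o j₀ (some i)) ≤ k := by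
        have := forC_update (i := i) (o := o) (j₀ := j₀) (x := some i)
          (fun l' h => by simpa using h.symm) hex
        omega
      have hkle : k ≤ S.m+1 := by omega
      have hIH1 := IH hkle i _ hfor1
      have hIH2 := IH hkle i _ hfor2
      have hY := Tq_le_Fq (S := S) (Ω := Ω) (Φ := Φ) l o
      have hE := Eq'_nonneg hΩ hpsh hneg
      have hF := Fq_nonneg hΩ hpsh hneg
      have hcoef1 : (0:ℝ) ≤ 1/(2*(ε'/2)) := by positivity
      have hcoef2 : (0:ℝ) ≤ (ε'/2)/2 := by positivity
      have hchain : S.Tq Ω Φ i o ≤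
          (ccSeq (S.m+1) k * S.Eq' Ω Φ + epsAux (S.m+1-k) * S.Fq Ω Φ)
          + (1/(2*(ε'/2))) * (ccSeq (S.m+1) k * S.Eq' Ω Φ + epsAux (S.m+1-k) * S.Fq Ω Φ)
          + ((ε'/2)/2) * S.Fq Ω Φ := by
        refine le_trans hstep (add_le_add (add_le_add hIH1 ?_) ?_)
        · exact mul_le_mul_of_nonneg_left hIH2 hcoef1
        · exact mul_le_mul_of_nonneg_left hY hcoef2
      have hinv : 1/(2*(ε'/2)) = 1/ε' := by
        field_simp
      rw [hinv, hrel] at hchain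
      have hcoef : ε'^2/3 + (1/ε')*(ε'^2/3) + ε'/4 ≤ ε' := by
        have h0 : (1/ε')*(ε'^2/3) = ε'/3 := by
          field_simp
        rw [h0]
        nlinarith
      have hfinal : (ccSeq (S.m+1) k * S.Eq' Ω Φ + ε'^2/3 * S.Fq Ω Φ)
          + (1/ε') * (ccSeq (S.m+1) k * S.Eq' Ω Φ + ε'^2/3 * S.Fq Ω Φ)
          + ((ε'/2)/2) * S.Fq Ω Φ ≤
          ccSeq (S.m+1) (k+1) * S.Eq' Ω Φ + ε' * S.Fq Ω Φ := by
        rw [ccSeq_succ]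
        have hEe : (ccSeq (S.m+1) k * S.Eq' Ω Φ + ε'^2/3 * S.Fq Ω Φ)
            + (1/ε') * (ccSeq (S.m+1) k * S.Eq' Ω Φ + ε'^2/3 * S.Fq Ω Φ)
            + ((ε'/2)/2) * S.Fq Ω Φ
            = (ccSeq (S.m+1) k * (1 + 1/ε')) * S.Eq' Ω Φ
              + (ε'^2/3 + (1/ε')*(ε'^2/3) + ε'/4) * S.Fq Ω Φ := by ring
        rw [hEe, hε']
        exact add_le_add (le_refl _) (mul_le_mul_of_nonneg_right hcoef hF)
      exact le_trans hchain hfinal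

end PPSetup
namespace PPSetup

variable {S : PPSetup}

lemma neg_wedge_mono (s s' : Fin (S.m+1) → S.Z) (hs : ∀ j, 0 ≤ s j) (h : ∀ j, s j ≤ s' j)
    (f : C(S.X, ℝ)) (hf : f ≤ 0) : -(S.wedge s f) ≤ -(S.wedge s' f) := by
  have h1 := wedge_mono s s' hs h (-f) (by simpa using neg_nonneg.mpr hf)
  rw [map_neg, map_neg] at h1
  linarith

lemma Fq_le {Ω : S.Z} {Φ : Fin (S.m+2) → S.D}
    (hΩ : 0 ≤ Ω) (hpsh : ∀ l, 0 ≤ Ω + S.ddc (Φ l)) (hneg : ∀ l, (Φ l : C(S.X,ℝ)) ≤ 0) :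
    S.Fq Ω Φ ≤ 2 * ccSeq (S.m+1) (S.m+1) * S.Eq' Ω Φ := by
  have h1 : S.Fq Ω Φ ≤ ccSeq (S.m+1) (S.m+1) * S.Eq' Ω Φ + epsAux 0 * S.Fq Ω Φ := by
    apply Finset.sup'_le
    intro p _
    have hfor : S.forC p.1 p.2 ≤ S.m+1 := by
      unfold forC
      exact le_trans (Finset.card_filter_le _ _) (by simp)
    have h2 := claim_ind hΩ hpsh hneg (S.m+1) (le_refl _) p.1 p.2 hfor
    rwa [Nat.sub_self] at h2
  have h0 : epsAux 0 = 1/2 := rfl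
  rw [h0] at h1
  linarith

lemma neg_epair_le {ω : Fin (S.m+2) → S.Z} {Φ : Fin (S.m+2) → S.D} {Ω : S.Z}
    (hω : ∀ i, 0 ≤ ω i) (hpshω : ∀ i, 0 ≤ ω i + S.ddc (Φ i))
    (hneg : ∀ l, (Φ l : C(S.X,ℝ)) ≤ 0)
    (hle : ∀ l, ω l ≤ Ω) :
    -S.epair (fun i => (ω i, Φ i)) ≤ ((S.m:ℝ)+2) * S.Fq Ω Φ := by
  unfold epair
  rw [← Finset.sum_neg_distrib]
  refine le_trans (Finset.sum_le_card_nsmul _ _ (S.Fq Ω Φ) ?_) ?_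
  · intro i _
    have hmono : -(S.wedge (fun j => if ((i.succAbove j : Fin (S.m+2)) : ℕ) < (i:ℕ)
        then ω (i.succAbove j) else ω (i.succAbove j) + S.ddc (Φ (i.succAbove j)))
        ((Φ i : C(S.X,ℝ)))) ≤ S.Tq Ω Φ i (fun j =>
          if ((i.succAbove j : Fin (S.m+2)) : ℕ) < (i:ℕ) then none
          else some (i.succAbove j)) := by
      rw [Tq]
      apply neg_wedge_mono _ _ ?_ ?_ _ (hneg i)
      · intro j
        by_cases h : ((i.succAbove j : Fin (S.m+2)) : ℕ) < (i:ℕ)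
        · rw [if_pos h]; exact hω _
        · rw [if_neg h]; exact hpshω _
      · intro j
        by_cases h : ((i.succAbove j : Fin (S.m+2)) : ℕ) < (i:ℕ)
        · rw [if_pos h, if_pos h]
          exact hle _
        · rw [if_neg h, if_neg h]
          exact add_le_add_left (hle _) _
    exact le_trans (by exact hmono) (Tq_le_Fq _ _)
  · rw [Finset.card_univ, Fintype.card_fin, nsmul_eq_mul]
    push_cast
    exact le_refl _

lemma Eq'_le {ω : Fin (S.m+2) → S.Z} {Φ : Fin (S.m+2) → S.D} {Ω : S.Z} {c : ℝ}
    (hω : ∀ i, 0 ≤ ω i) (hpshω : ∀ i, 0 ≤ ω i + S.ddc (Φ i))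
    (hneg : ∀ l, (Φ l : C(S.X,ℝ)) ≤ 0)
    (hΩ : 0 ≤ Ω) (hpshΩ : ∀ l, 0 ≤ Ω + S.ddc (Φ l))
    (hc1 : 1 ≤ c) (hΩc : ∀ j, Ω ≤ c • ω j) :
    S.Eq' Ω Φ ≤ ((S.m:ℝ)+2) * c^(S.m+1) * 2^(S.m+1) *
      Finset.univ.sup' Finset.univ_nonempty (fun j => -S.epow (ω j) (Φ j)) := by
  have hc0 : 0 ≤ c := by linarith
  set M := Finset.univ.sup' Finset.univ_nonempty
    (fun j : Fin (S.m+2) => -S.epow (ω j) (Φ j)) with hM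
  apply Finset.sup'_le
  intro j _
  have hMj : -S.epow (ω j) (Φ j) ≤ M :=
    Finset.le_sup' (f := fun j : Fin (S.m+2) => -S.epow (ω j) (Φ j)) (Finset.mem_univ j)
  have hM0 : 0 ≤ M := by
    refine le_trans ?_ hMj
    rw [neg_nonneg]
    exact epow_nonpos _ _ (hω j) (hpshω j) (hneg j)
  set q : S.Z := ω j + S.ddc (Φ j) with hq
  set H : S.Z := c • ω j + q with hH
  have hqpos : 0 ≤ q := hpshω j
  have hHpos : 0 ≤ H := add_nonneg (smul_nonneg hc0 (hω j)) hqpos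
  -- step 1
  have hs1 : -S.epow Ω (Φ j) ≤ ((S.m:ℝ)+2) * (-(S.wedge (fun _ => H) ((Φ j : C(S.X,ℝ))))) := by
    rw [epow_eq_sum (S := S) Ω (Φ j), ← Finset.sum_neg_distrib]
    refine le_trans (Finset.sum_le_card_nsmul _ _
      (-(S.wedge (fun _ => H) ((Φ j : C(S.X,ℝ))))) ?_) ?_
    · intro i _
      apply neg_wedge_mono _ _ ?_ ?_ _ (hneg j)
      · intro j'
        by_cases h : (j':ℕ) < (i:ℕ)
        · rw [if_pos h]; exact hΩ
        · rw [if_neg h]; exact hpshΩ j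
      · intro j'
        by_cases h : (j':ℕ) < (i:ℕ)
        · rw [if_pos h]
          exact le_trans (hΩc j) (le_add_of_nonneg_right hqpos)
        · rw [if_neg h]
          calc Ω + S.ddc (Φ j) ≤ c • ω j + S.ddc (Φ j) := add_le_add_left (hΩc j) _
            _ ≤ c • ω j + (ω j + S.ddc (Φ j)) :=
                add_le_add_right (le_add_of_nonneg_left (hω j)) _
    · rw [Finset.card_univ, Fintype.card_fin, nsmul_eq_mul]
      push_cast
      exact le_refl _
  -- step 2
  have hs2 : -(S.wedge (fun _ => H) ((Φ j : C(S.X,ℝ)))) ≤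
      c^(S.m+1) * (-(S.wedge (fun _ => ω j + q) ((Φ j : C(S.X,ℝ))))) := by
    have hHle : H ≤ c • (ω j + q) := by
      rw [smul_add, hH]
      refine add_le_add_right ?_ _
      have h2 := smul_le_smul_right' (S := S) hc1 hqpos
      rwa [one_smul] at h2
    have hmono := neg_wedge_mono (fun _ => H) (fun _ => c • (ω j + q))
      (fun _ => hHpos) (fun _ => hHle) _ (hneg j)
    have hsmul := S.wedge.map_smul_univ (fun _ : Fin (S.m+1) => c) (fun _ => ω j + q)
    rw [Finset.prod_const, Finset.card_univ, Fintype.card_fin] at hsmul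
    rw [hsmul] at hmono
    simp only [LinearMap.smul_apply, smul_eq_mul] at hmono
    refine le_trans hmono ?_
    rw [mul_neg]
  -- step 3
  have hs3 : -(S.wedge (fun _ => ω j + q) ((Φ j : C(S.X,ℝ)))) ≤
      2^(S.m+1) * (-S.epow (ω j) (Φ j)) := by
    have hadd : (fun _ : Fin (S.m+1) => ω j + q) =
        (fun _ : Fin (S.m+1) => ω j) + (fun _ : Fin (S.m+1) => q) := rfl
    have hexp := S.wedge.map_add_univ (fun _ : Fin (S.m+1) => ω j) (fun _ : Fin (S.m+1) => q)
    rw [hadd, hexp]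
    rw [LinearMap.sum_apply, ← Finset.sum_neg_distrib]
    refine le_trans (Finset.sum_le_card_nsmul _ _ (-S.epow (ω j) (Φ j)) ?_) ?_
    · intro s _
      have hpw : (Finset.piecewise s (fun _ : Fin (S.m+1) => ω j) (fun _ : Fin (S.m+1) => q))
          = fun j' => if j' ∈ s then ω j else ω j + S.ddc (Φ j) := rfl
      rw [hpw]
      exact pure_le_neg_epow (ω j) (Φ j) (hω j) (hpshω j) (hneg j) s
    · rw [Finset.card_univ, Fintype.card_finset, Fintype.card_fin, nsmul_eq_mul]
      push_cast
      exact le_refl _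
  -- combine
  have hx1 : (0:ℝ) ≤ (S.m:ℝ)+2 := by positivity
  have hx2 : (0:ℝ) ≤ c^(S.m+1) := by positivity
  calc -S.epow Ω (Φ j) ≤ ((S.m:ℝ)+2) * (-(S.wedge (fun _ => H) ((Φ j : C(S.X,ℝ))))) := hs1
    _ ≤ ((S.m:ℝ)+2) * (c^(S.m+1) * (-(S.wedge (fun _ => ω j + q) ((Φ j : C(S.X,ℝ)))))) :=
        mul_le_mul_of_nonneg_left hs2 hx1
    _ ≤ ((S.m:ℝ)+2) * (c^(S.m+1) * (2^(S.m+1) * (-S.epow (ω j) (Φ j)))) := by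
        refine mul_le_mul_of_nonneg_left (mul_le_mul_of_nonneg_left hs3 hx2) hx1
    _ ≤ ((S.m:ℝ)+2) * c^(S.m+1) * 2^(S.m+1) * M := by
        have := mul_le_mul_of_nonneg_left hMj
          (show (0:ℝ) ≤ ((S.m:ℝ)+2) * c^(S.m+1) * 2^(S.m+1) by positivity)
        calc ((S.m:ℝ)+2) * (c^(S.m+1) * (2^(S.m+1) * (-S.epow (ω j) (Φ j))))
            = (((S.m:ℝ)+2) * c^(S.m+1) * 2^(S.m+1)) * (-S.epow (ω j) (Φ j)) := by ring
          _ ≤ (((S.m:ℝ)+2) * c^(S.m+1) * 2^(S.m+1)) * M := this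

end PPSetup
/-- There is a constant Cₙ > 0 depending only on n such that for pairwise
commensurable ω₀,…,ωₙ ∈ 𝒵₊ with δ ≥ max_{i,j} d_T(ωᵢ,ω_j) and φᵢ ∈ 𝒟_{ωᵢ} with φᵢ ≤ 0, one has
0 ≥ (ω₀,φ₀)⋯(ωₙ,φₙ) ≥ Cₙ·e^{Cₙδ}·min_i (ωᵢ,φᵢ)^{n+1}, where each (ωᵢ,φᵢ)^{n+1} ≤ 0. -/
theorem statement5 :
    ∃ C : ℕ → ℝ, (∀ k, 0 < C k) ∧
      ∀ (S : PPSetup) (ω : Fin (S.m + 2) → S.Z) (φ : Fin (S.m + 2) → S.D) (δ : ℝ),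
        0 ≤ δ →
        (∀ i, 0 ≤ ω i) →
        (∀ i j, S.commensurable (ω i) (ω j)) →
        (∀ i j, S.dT (ω i) (ω j) ≤ δ) →
        (∀ i, φ i ∈ S.psh (ω i)) →
        (∀ i, (φ i : C(S.X, ℝ)) ≤ 0) →
        (∀ i, S.epow (ω i) (φ i) ≤ 0) ∧
        S.epair (fun i => (ω i, φ i)) ≤ 0 ∧
        C S.m * Real.exp (C S.m * δ) * (⨅ i, S.epow (ω i) (φ i)) ≤
          S.epair fun i => (ω i, φ i) := by
  refine ⟨fun k => 2^(k+2) * ((k:ℝ)+2)^(k+3) * PPSetup.ccSeq (k+1) (k+1) + ((k:ℝ)+2),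
    ?_, ?_⟩
  · intro k
    have h1 := PPSetup.ccSeq_pos (k+1) (k+1)
    positivity
  intro S ω φ δ hδ hω hcom hdT hpshmem hneg
  have hpsh : ∀ i, 0 ≤ ω i + S.ddc (φ i) := fun i => hpshmem i
  have part1 : ∀ i, S.epow (ω i) (φ i) ≤ 0 :=
    fun i => PPSetup.epow_nonpos _ _ (hω i) (hpsh i) (hneg i)
  have part2 : S.epair (fun i => (ω i, φ i)) ≤ 0 := by
    unfold PPSetup.epair
    apply Finset.sum_nonpos
    intro i _
    apply PPSetup.wedge_nonpos _ _ _ (hneg i)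
    intro j
    by_cases h : ((i.succAbove j : Fin (S.m+2)) : ℕ) < (i:ℕ)
    · rw [if_pos h]; exact hω _
    · rw [if_neg h]; exact hpsh _
  refine ⟨part1, part2, ?_⟩
  -- notation
  have hΩpos : 0 ≤ ∑ l, ω l := Finset.sum_nonneg (fun l _ => hω l)
  have hpshΩ : ∀ l, 0 ≤ (∑ l', ω l') + S.ddc (φ l) := by
    intro l
    have h1 : (∑ l', ω l') + S.ddc (φ l)
        = (∑ l' ∈ Finset.univ.erase l, ω l') + (ω l + S.ddc (φ l)) := by
      rw [← Finset.add_sum_erase _ _ (Finset.mem_univ l)]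
      abel
    rw [h1]
    exact add_nonneg (Finset.sum_nonneg (fun l' _ => hω l')) (hpsh l)
  have hωle : ∀ l j, ω l ≤ Real.exp δ • ω j := fun l j =>
    PPSetup.le_exp_smul_of_dT_le (ω j) (ω l) (hω j) (hcom j l) δ (hdT j l)
  have hexp1 : (1:ℝ) ≤ Real.exp δ := Real.one_le_exp hδ
  have hc1 : (1:ℝ) ≤ ((S.m:ℝ)+2) * Real.exp δ := by nlinarith [(show (0:ℝ) ≤ (S.m:ℝ) from Nat.cast_nonneg S.m)]
  have hΩc : ∀ j, (∑ l, ω l) ≤ (((S.m:ℝ)+2) * Real.exp δ) • ω j := by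
    intro j
    calc ∑ l, ω l ≤ ∑ _l : Fin (S.m+2), Real.exp δ • ω j :=
          Finset.sum_le_sum (fun l _ => hωle l j)
      _ = (S.m+2) • (Real.exp δ • ω j) := by
          rw [Finset.sum_const, Finset.card_univ, Fintype.card_fin]
      _ = (((S.m:ℝ)+2) * Real.exp δ) • ω j := by
          rw [← Nat.cast_smul_eq_nsmul ℝ, smul_smul]
          congr 1
          push_cast
          ring
  have hle : ∀ l, ω l ≤ ∑ l', ω l' := by
    intro l
    have h1 := hωle l l
    exact Finset.single_le_sum (f := ω) (fun l' _ => hω l') (Finset.mem_univ l)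
  -- the three bounds
  have hB := PPSetup.neg_epair_le (Ω := ∑ l, ω l) hω hpsh hneg hle
  have hA := PPSetup.Fq_le (Ω := ∑ l, ω l) (Φ := φ) hΩpos hpshΩ hneg
  have hC := PPSetup.Eq'_le (Ω := ∑ l, ω l) (c := ((S.m:ℝ)+2) * Real.exp δ)
    hω hpsh hneg hΩpos hpshΩ hc1 hΩc
  have hccpos := PPSetup.ccSeq_pos (S.m+1) (S.m+1)
  have hM0 : (0:ℝ) ≤ Finset.univ.sup' Finset.univ_nonempty
      (fun j : Fin (S.m+2) => -S.epow (ω j) (φ j)) := by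
    refine le_trans ?_ (Finset.le_sup'
      (f := fun j : Fin (S.m+2) => -S.epow (ω j) (φ j)) (Finset.mem_univ 0))
    rw [neg_nonneg]
    exact part1 0
  set M : ℝ := Finset.univ.sup' Finset.univ_nonempty
    (fun j : Fin (S.m+2) => -S.epow (ω j) (φ j)) with hMdef
  have hFq0 := PPSetup.Fq_nonneg (Ω := ∑ l, ω l) (Φ := φ) hΩpos hpshΩ hneg
  have hEq0 := PPSetup.Eq'_nonneg (Ω := ∑ l, ω l) (Φ := φ) hΩpos hpshΩ hneg
  have hchain : -S.epair (fun i => (ω i, φ i)) ≤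
      (2^(S.m+2) * ((S.m:ℝ)+2)^(S.m+3) * PPSetup.ccSeq (S.m+1) (S.m+1))
        * Real.exp (((S.m:ℝ)+1) * δ) * M := by
    calc -S.epair (fun i => (ω i, φ i)) ≤ ((S.m:ℝ)+2) * S.Fq (∑ l, ω l) φ := hB
      _ ≤ ((S.m:ℝ)+2) * (2 * PPSetup.ccSeq (S.m+1) (S.m+1) * S.Eq' (∑ l, ω l) φ) :=
          mul_le_mul_of_nonneg_left hA (by positivity)
      _ ≤ ((S.m:ℝ)+2) * (2 * PPSetup.ccSeq (S.m+1) (S.m+1) *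
          (((S.m:ℝ)+2) * (((S.m:ℝ)+2) * Real.exp δ)^(S.m+1) * 2^(S.m+1) * M)) := by
          refine mul_le_mul_of_nonneg_left (mul_le_mul_of_nonneg_left hC ?_) ?_
          · positivity
          · positivity
      _ = (2^(S.m+2) * ((S.m:ℝ)+2)^(S.m+3) * PPSetup.ccSeq (S.m+1) (S.m+1))
            * Real.exp (((S.m:ℝ)+1) * δ) * M := by
          rw [mul_pow]
          have hh : (Real.exp δ)^(S.m+1) = Real.exp (((S.m:ℝ)+1) * δ) := by
            rw [← Real.exp_nat_mul]
            congr 1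
            push_cast
            ring
          rw [hh]
          ring
  -- constant comparison
  set C0 : ℝ := 2^(S.m+2) * ((S.m:ℝ)+2)^(S.m+3) * PPSetup.ccSeq (S.m+1) (S.m+1) + ((S.m:ℝ)+2)
    with hC0
  have hC0pos : 0 < C0 := by
    rw [hC0]; positivity
  have hA0le : 2^(S.m+2) * ((S.m:ℝ)+2)^(S.m+3) * PPSetup.ccSeq (S.m+1) (S.m+1) ≤ C0 := by
    rw [hC0]
    have : (0:ℝ) ≤ (S.m:ℝ) := Nat.cast_nonneg S.m
    linarith
  have hexp2 : Real.exp (((S.m:ℝ)+1) * δ) ≤ Real.exp (C0 * δ) := by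
    apply Real.exp_le_exp.mpr
    apply mul_le_mul_of_nonneg_right ?_ hδ
    have hA0nn : (0:ℝ) ≤ 2^(S.m+2) * ((S.m:ℝ)+2)^(S.m+3) * PPSetup.ccSeq (S.m+1) (S.m+1) :=
      mul_nonneg (mul_nonneg (by positivity) (by positivity)) (le_of_lt hccpos)
    have h1 : ((S.m:ℝ)+2) ≤ C0 := by
      rw [hC0]
      linarith
    linarith
  have hKC : (2^(S.m+2) * ((S.m:ℝ)+2)^(S.m+3) * PPSetup.ccSeq (S.m+1) (S.m+1))
      * Real.exp (((S.m:ℝ)+1) * δ) * M ≤ C0 * Real.exp (C0 * δ) * M := by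
    refine mul_le_mul_of_nonneg_right ?_ hM0
    refine mul_le_mul hA0le hexp2 (le_of_lt (Real.exp_pos _)) (le_of_lt hC0pos)
  obtain ⟨j₀, -, hj₀⟩ := Finset.exists_mem_eq_sup' (Finset.univ_nonempty)
    (fun j : Fin (S.m+2) => -S.epow (ω j) (φ j))
  have hinf : (⨅ i, S.epow (ω i) (φ i)) ≤ S.epow (ω j₀) (φ j₀) :=
    ciInf_le (Set.Finite.bddBelow (Set.finite_range _)) j₀
  have hpowM : S.epow (ω j₀) (φ j₀) = -M := by
    rw [hMdef, hj₀]
    ring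
  have hCC : C0 * Real.exp (C0 * δ) * (⨅ i, S.epow (ω i) (φ i)) ≤
      S.epair (fun i => (ω i, φ i)) := by
    have h7 : C0 * Real.exp (C0 * δ) * (⨅ i, S.epow (ω i) (φ i)) ≤
        C0 * Real.exp (C0 * δ) * S.epow (ω j₀) (φ j₀) :=
      mul_le_mul_of_nonneg_left hinf (by positivity)
    have h8 : C0 * Real.exp (C0 * δ) * S.epow (ω j₀) (φ j₀)
        = -(C0 * Real.exp (C0 * δ) * M) := by
      rw [hpowM]; ring
    have h9 : -S.epair (fun i => (ω i, φ i)) ≤ C0 * Real.exp (C0 * δ) * M :=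
      le_trans hchain hKC
    linarith
  exact hCC
end
end

section
/- In the synthetic setup, if T_ω < ∞ for some ω ∈ 𝒵₊ with [ω] ∈ Pos(X), then T_{ω'} < ∞ for every ω' ∈ 𝒵₊ with [ω'] ∈ Pos(X). (Hence the submean value property is independent of the choice of ω.) -/
open scoped BigOperators
noncomputable section

namespace PPSetup

variable (S : PPSetup)

lemma posfun_abs (P : C(S.X, ℝ) →ₗ[ℝ] ℝ) (hP : ∀ f, 0 ≤ f → 0 ≤ P f)
    (f : C(S.X, ℝ)) (c : ℝ) (hc : ∀ x, |f x| ≤ c) : |P f| ≤ c * P S.one := by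
  have h1 : 0 ≤ P (c • S.one - f) := by
    refine hP _ ?_
    rw [ContinuousMap.le_def]; intro x
    have := abs_le.mp (hc x)
    simp only [ContinuousMap.sub_apply, ContinuousMap.smul_apply, ContinuousMap.zero_apply,
      PPSetup.one, ContinuousMap.const_apply, smul_eq_mul, mul_one]
    linarith [this.2]
  have h2 : 0 ≤ P (c • S.one + f) := by
    refine hP _ ?_
    rw [ContinuousMap.le_def]; intro x
    have := abs_le.mp (hc x)
    simp only [ContinuousMap.add_apply, ContinuousMap.smul_apply, ContinuousMap.zero_apply,
      PPSetup.one, ContinuousMap.const_apply, smul_eq_mul, mul_one]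
    linarith [this.1]
  rw [map_sub, map_smul, smul_eq_mul] at h1
  rw [map_add, map_smul, smul_eq_mul] at h2
  rw [abs_le]; constructor <;> linarith

lemma ddc_mass (σ : S.D) (θ : Fin S.m → S.Z) :
    S.wedge (Fin.cons (S.ddc σ) θ) S.one = 0 := by
  have h := S.hodge_symm θ (S.constD 1) σ
  rw [show S.ddc (S.constD 1) = 0 from S.ddc_const 1] at h
  rw [show S.wedge (Fin.cons (0 : S.Z) θ) = 0 from S.wedge.map_coord_zero 0 (by simp)] at h
  simpa [PPSetup.constD, PPSetup.one] using h

lemma wedge_swap (a b : S.Z) (k : ℕ) (hk1 : 1 ≤ k) (hk2 : k ≤ S.m) :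
    S.wedge (Fin.cons a fun j : Fin S.m => if (j : ℕ) < k then b else a) =
    S.wedge (Fin.cons b fun j : Fin S.m => if (j : ℕ) < k - 1 then b else a) := by
  set K : Fin (S.m + 1) := ⟨k, by omega⟩ with hKdef
  have hKsucc : K = Fin.succ ⟨k - 1, by omega⟩ := by
    apply Fin.ext; simp [hKdef]; omega
  have hcomp : (Fin.cons a fun j : Fin S.m => if (j : ℕ) < k then b else a) ∘ (Equiv.swap 0 K)
      = Fin.cons b fun j : Fin S.m => if (j : ℕ) < k - 1 then b else a := by
    funext i
    rcases eq_or_ne i 0 with h0 | h0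
    · subst h0
      simp only [Function.comp_apply, Equiv.swap_apply_left, Fin.cons_zero]
      rw [hKsucc, Fin.cons_succ]
      simp only [Fin.val_mk]
      rw [if_pos (by omega)]
    · rcases eq_or_ne i K with hK | hK
      · subst hK
        simp only [Function.comp_apply, Equiv.swap_apply_right, Fin.cons_zero]
        rw [hKsucc, Fin.cons_succ]
        simp only [Fin.val_mk]
        rw [if_neg (by omega)]
      · obtain ⟨j, rfl⟩ := Fin.eq_succ_of_ne_zero h0
        simp only [Function.comp_apply]
        rw [Equiv.swap_apply_of_ne_of_ne h0 hK, Fin.cons_succ, Fin.cons_succ]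
        have hjk : (j : ℕ) + 1 ≠ k := by
          intro hc; exact hK (by apply Fin.ext; simp [hKdef, hc])
        by_cases hjlt : (j : ℕ) < k - 1
        · rw [if_pos (by omega), if_pos hjlt]
        · rw [if_neg (by omega), if_neg hjlt]
  have h := S.wedge_symm (Equiv.swap 0 K)
    (Fin.cons a fun j : Fin S.m => if (j : ℕ) < k then b else a)
  rw [hcomp] at h
  exact h.symm

lemma step_ineq (a b : S.Z) (c : ℝ) (τ : S.D) (hp : 0 ≤ b + S.ddc τ - c • a)
    (θ : Fin S.m → S.Z) (hθ : ∀ j, 0 ≤ θ j) (g : C(S.X, ℝ)) (hg : 0 ≤ g) :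
    c * S.wedge (Fin.cons a θ) g ≤
      S.wedge (Fin.cons b θ) g + S.wedge (Fin.cons (S.ddc τ) θ) g := by
  have h0 : 0 ≤ S.wedge (Fin.cons (b + S.ddc τ - c • a) θ) g := by
    refine S.wedge_pos _ (fun i => ?_) g hg
    refine Fin.cases hp hθ i
  have he : b + S.ddc τ - c • a = (b + S.ddc τ) + (-c) • a := by
    rw [neg_smul, ← sub_eq_add_neg]
  rw [he, MultilinearMap.cons_add, MultilinearMap.cons_smul, MultilinearMap.cons_add] at h0
  simp only [LinearMap.add_apply, LinearMap.smul_apply, smul_eq_mul] at h0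
  linarith

lemma dterm_bound (ω' : S.Z) (hω'0 : 0 ≤ ω') (τ φ : S.D) (hφ : φ ∈ S.psh ω')
    (θ : Fin S.m → S.Z) (hθ : ∀ j, 0 ≤ θ j) :
    S.wedge (Fin.cons (S.ddc τ) θ) (-(φ : C(S.X, ℝ))) ≤
      2 * ‖(τ : C(S.X, ℝ))‖ * S.wedge (Fin.cons ω' θ) S.one := by
  have hodge : S.wedge (Fin.cons (S.ddc τ) θ) (φ : C(S.X, ℝ))
      = S.wedge (Fin.cons (S.ddc φ) θ) (τ : C(S.X, ℝ)) := S.hodge_symm θ φ τ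
  have hsplit : S.wedge (Fin.cons (ω' + S.ddc φ) θ)
      = S.wedge (Fin.cons ω' θ) + S.wedge (Fin.cons (S.ddc φ) θ) :=
    MultilinearMap.cons_add _ _ _ _
  have hPpos : ∀ f, 0 ≤ f → 0 ≤ S.wedge (Fin.cons (ω' + S.ddc φ) θ) f :=
    fun f hf => S.wedge_pos _ (fun i => Fin.cases hφ hθ i) f hf
  have hQpos : ∀ f, 0 ≤ f → 0 ≤ S.wedge (Fin.cons ω' θ) f :=
    fun f hf => S.wedge_pos _ (fun i => Fin.cases hω'0 hθ i) f hf
  have hτ : ∀ x, |(τ : C(S.X, ℝ)) x| ≤ ‖(τ : C(S.X, ℝ))‖ := fun x => by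
    rw [← Real.norm_eq_abs]; exact ContinuousMap.norm_coe_le_norm _ x
  have hP := S.posfun_abs _ hPpos (τ : C(S.X, ℝ)) _ hτ
  have hQ := S.posfun_abs _ hQpos (τ : C(S.X, ℝ)) _ hτ
  have hmass : S.wedge (Fin.cons (ω' + S.ddc φ) θ) S.one = S.wedge (Fin.cons ω' θ) S.one := by
    rw [hsplit, LinearMap.add_apply, S.ddc_mass, add_zero]
  rw [hmass] at hP
  have hs : S.wedge (Fin.cons (S.ddc φ) θ) (τ : C(S.X, ℝ))
      = S.wedge (Fin.cons (ω' + S.ddc φ) θ) (τ : C(S.X, ℝ))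
        - S.wedge (Fin.cons ω' θ) (τ : C(S.X, ℝ)) := by
    rw [hsplit, LinearMap.add_apply]; ring
  rw [map_neg, hodge, hs]
  have h1 := abs_le.mp hP
  have h2 := abs_le.mp hQ
  linarith [h1.1, h1.2, h2.1, h2.2]

end PPSetup

/-- If T_ω < ∞ for some ω ∈ 𝒵₊ with [ω] ∈ Pos(X), then T_{ω'} < ∞ for every
ω' ∈ 𝒵₊ with [ω'] ∈ Pos(X). -/
theorem statement6 (S : PPSetup) (ω ω' : S.Z) (hω : 0 ≤ ω) (hω' : 0 ≤ ω')
    (hpos : S.cls ω ∈ S.Pos) (hpos' : S.cls ω' ∈ S.Pos)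
    (h : S.submeanBdd ω) : S.submeanBdd ω' := by
  classical
  rcases isEmpty_or_nonempty S.X with hX | hX
  · haveI : Subsingleton C(S.X, ℝ) := ⟨fun f g => ContinuousMap.ext fun x => isEmptyElim x⟩
    refine ⟨(⨆ p : S.X, ((0 : S.D) : C(S.X, ℝ)) p) - S.muOmega ω' ((0 : S.D) : C(S.X, ℝ)), ?_⟩
    rintro x ⟨φ, hφ, rfl⟩
    have h1 : ((φ : C(S.X, ℝ))) = ((0 : S.D) : C(S.X, ℝ)) := Subsingleton.elim _ _
    simp only [h1]
    exact le_rfl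
  obtain ⟨T, hT⟩ := h
  -- comparison data from hpos : ε • ω' ≤ ω + ddc τ
  obtain ⟨ε, hε, hε2⟩ := hpos (S.cls ω')
  obtain ⟨θ₁, hθ₁0, hθ₁c⟩ := hε2 (-ε) (by rw [abs_neg, abs_of_pos hε])
  have hmk : S.cls θ₁ = S.cls (ω + (-ε) • ω') := by
    rw [hθ₁c]
    unfold PPSetup.cls
    simp [Submodule.Quotient.mk_add, Submodule.Quotient.mk_smul]
  obtain ⟨τ, hτ⟩ := LinearMap.mem_range.mp ((Submodule.Quotient.eq _).mp hmk)
  have hcmp : 0 ≤ ω + S.ddc τ - ε • ω' := by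
    rw [hτ, show ω + (θ₁ - (ω + (-ε) • ω')) - ε • ω' = θ₁ by rw [neg_smul]; abel]
    exact hθ₁0
  -- comparison data from hpos' : ε' • ω ≤ ω' + ddc τ'
  obtain ⟨ε', hε', hε'2⟩ := hpos' (S.cls ω)
  obtain ⟨θ₂, hθ₂0, hθ₂c⟩ := hε'2 (-ε') (by rw [abs_neg, abs_of_pos hε'])
  have hmk' : S.cls θ₂ = S.cls (ω' + (-ε') • ω) := by
    rw [hθ₂c]
    unfold PPSetup.cls
    simp [Submodule.Quotient.mk_add, Submodule.Quotient.mk_smul]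
  obtain ⟨τ', hτ'⟩ := LinearMap.mem_range.mp ((Submodule.Quotient.eq _).mp hmk')
  have hcmp' : 0 ≤ ω' + S.ddc τ' - ε' • ω := by
    rw [hτ', show ω' + (θ₂ - (ω' + (-ε') • ω)) - ε' • ω = θ₂ by rw [neg_smul]; abel]
    exact hθ₂0
  -- basic positivity
  have honeC : (0 : C(S.X, ℝ)) ≤ S.one := S.one_nonneg
  have hV0 : 0 ≤ S.Vol ω := S.wedge_pos _ (fun _ => hω) _ honeC
  have hμω_eval : ∀ f : C(S.X, ℝ),
      S.muOmega ω f = (S.Vol ω)⁻¹ * S.wedge (fun _ : Fin (S.m + 1) => ω) f := by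
    intro f; unfold PPSetup.muOmega; rw [LinearMap.smul_apply, smul_eq_mul]
  have hVpos : 0 < S.Vol ω := by
    rcases hV0.lt_or_eq with hlt | heq
    · exact hlt
    · exfalso
      have hcst : ∀ c : ℝ, c ∈ S.Tset ω := by
        intro c
        refine ⟨S.constD c, ?_, ?_⟩
        · show 0 ≤ ω + S.ddc (S.constD c)
          rw [show S.ddc (S.constD c) = 0 from S.ddc_const c, add_zero]
          exact hω
        · have h1 : (⨆ p : S.X, ((S.constD c : S.D) : C(S.X, ℝ)) p) = c := by
            simp [PPSetup.constD]
          have h2 : S.muOmega ω ((S.constD c : S.D) : C(S.X, ℝ)) = 0 := by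
            rw [hμω_eval, ← heq, inv_zero, zero_mul]
          rw [h1, h2, sub_zero]
      linarith [hT (hcst (T + 1))]
  have hμωpos : ∀ f, 0 ≤ f → 0 ≤ S.muOmega ω f := fun f hf => by
    rw [hμω_eval]
    exact mul_nonneg (inv_nonneg.mpr hV0) (S.wedge_pos _ (fun _ => hω) f hf)
  have hμωone : S.muOmega ω S.one = 1 := by
    rw [hμω_eval]; exact inv_mul_cancel₀ (ne_of_gt hVpos)
  have hcτ0 : (0:ℝ) ≤ ‖(τ : C(S.X, ℝ))‖ := norm_nonneg _
  have hτabs : ∀ x, |(τ : C(S.X, ℝ)) x| ≤ ‖(τ : C(S.X, ℝ))‖ := fun x => by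
    rw [← Real.norm_eq_abs]; exact ContinuousMap.norm_coe_le_norm _ x
  set VB := S.Vol ω * ((T + 2 * ‖(τ : C(S.X, ℝ))‖) / ε) with hVBdef
  -- base bound from the T_ω hypothesis
  have hbase : ∀ φ : S.D, φ ∈ S.psh ω' → (∀ x, (φ : C(S.X, ℝ)) x ≤ 0) →
      (∃ x₀, (φ : C(S.X, ℝ)) x₀ = 0) →
      S.wedge (fun _ : Fin (S.m + 1) => ω) (-(φ : C(S.X, ℝ))) ≤ VB := by
    rintro φ hφ hle ⟨x₀, hx₀⟩
    set ψ : S.D := ε • φ + τ with hψdef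
    have hψ : ψ ∈ S.psh ω := by
      show 0 ≤ ω + S.ddc ψ
      have he : ω + S.ddc ψ = (ω + S.ddc τ - ε • ω') + ε • (ω' + S.ddc φ) := by
        rw [hψdef, map_add, map_smul, smul_add]; abel
      rw [he]
      exact add_nonneg hcmp (smul_nonneg hε.le hφ)
    have hψc : ((ψ : S.D) : C(S.X, ℝ)) = ε • (φ : C(S.X, ℝ)) + (τ : C(S.X, ℝ)) := rfl
    have hbddψ : BddAbove (Set.range fun p => ((ψ : S.D) : C(S.X, ℝ)) p) := by
      refine ⟨‖((ψ : S.D) : C(S.X, ℝ))‖, ?_⟩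
      rintro y ⟨p, rfl⟩
      exact (le_abs_self _).trans
        (by rw [← Real.norm_eq_abs]; exact ContinuousMap.norm_coe_le_norm _ p)
    have hTψ : (⨆ p : S.X, ((ψ : S.D) : C(S.X, ℝ)) p)
        - S.muOmega ω ((ψ : S.D) : C(S.X, ℝ)) ≤ T := hT ⟨ψ, hψ, rfl⟩
    have hsup : ((ψ : S.D) : C(S.X, ℝ)) x₀ ≤ ⨆ p : S.X, ((ψ : S.D) : C(S.X, ℝ)) p :=
      le_ciSup hbddψ x₀
    have hψx₀ : ((ψ : S.D) : C(S.X, ℝ)) x₀ = (τ : C(S.X, ℝ)) x₀ := by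
      rw [hψc]; simp [hx₀]
    have hμψ : S.muOmega ω ((ψ : S.D) : C(S.X, ℝ))
        = ε * S.muOmega ω (φ : C(S.X, ℝ)) + S.muOmega ω (τ : C(S.X, ℝ)) := by
      rw [hψc, map_add, map_smul, smul_eq_mul]
    have hμτ : |S.muOmega ω (τ : C(S.X, ℝ))| ≤ ‖(τ : C(S.X, ℝ))‖ := by
      have := S.posfun_abs _ hμωpos (τ : C(S.X, ℝ)) _ hτabs
      rwa [hμωone, mul_one] at this
    have hτx := abs_le.mp (hτabs x₀)
    have hμτ' := abs_le.mp hμτ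
    have hsup' : (τ : C(S.X, ℝ)) x₀ ≤ ⨆ p : S.X, ((ψ : S.D) : C(S.X, ℝ)) p := hψx₀ ▸ hsup
    have hkey : -(ε * S.muOmega ω (φ : C(S.X, ℝ))) ≤ T + 2 * ‖(τ : C(S.X, ℝ))‖ := by
      linarith [hτx.1, hsup', hTψ, hμψ, hμτ'.2]
    have hw : S.wedge (fun _ : Fin (S.m + 1) => ω) (-(φ : C(S.X, ℝ)))
        = S.Vol ω * (-(S.muOmega ω (φ : C(S.X, ℝ)))) := by
      rw [map_neg, hμω_eval, mul_neg, neg_inj, ← mul_assoc,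
        mul_inv_cancel₀ (ne_of_gt hVpos), one_mul]
    rw [hw, hVBdef]
    apply mul_le_mul_of_nonneg_left _ hV0
    rw [le_div_iff₀ hε]
    linarith [hkey]
  -- mass chain: Vol ω' > 0
  have hmassch : ∀ k : ℕ, k ≤ S.m →
      ε' ^ (k + 1) *
        S.wedge (Fin.cons ω fun j : Fin S.m => if (j : ℕ) < k then ω else ω') S.one
      ≤ S.Vol ω' := by
    intro k
    induction k with
    | zero =>
      intro _
      have hst := S.step_ineq ω ω' ε' τ' hcmp'
        (fun j : Fin S.m => if (j : ℕ) < 0 then ω else ω') (fun j => by simp [hω']) S.one honeC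
      rw [S.ddc_mass, add_zero] at hst
      have hall : (Fin.cons ω' fun j : Fin S.m => if (j : ℕ) < 0 then ω else ω')
          = fun _ : Fin (S.m + 1) => ω' := by
        funext i; refine Fin.cases rfl (fun j => by simp) i
      rw [hall] at hst
      rw [show ε' ^ (0 + 1) = ε' by norm_num]
      exact hst
    | succ k ih =>
      intro hk1
      have hst := S.step_ineq ω ω' ε' τ' hcmp'
        (fun j : Fin S.m => if (j : ℕ) < k + 1 then ω else ω')
        (fun j => by beta_reduce;  split <;> assumption) S.one honeC
      rw [S.ddc_mass, add_zero] at hst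
      have hsw := S.wedge_swap ω' ω (k + 1) (by omega) (by omega)
      simp only [Nat.add_sub_cancel] at hsw
      rw [hsw] at hst
      generalize hgen : S.wedge
        (Fin.cons ω fun j : Fin S.m => if (j : ℕ) < k + 1 then ω else ω') S.one = A at hst ⊢
      refine le_trans ?_ (ih (by omega))
      have hmul := mul_le_mul_of_nonneg_left hst (pow_nonneg hε'.le (k + 1))
      calc ε' ^ (k + 1 + 1) * A = ε' ^ (k + 1) * (ε' * A) := by ring
        _ ≤ _ := hmul
  have hV'pos : 0 < S.Vol ω' := by
    have hm := hmassch S.m le_rfl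
    have htail : (Fin.cons ω fun j : Fin S.m => if (j : ℕ) < S.m then ω else ω')
        = fun _ : Fin (S.m + 1) => ω := by
      funext i; refine Fin.cases rfl (fun j => by simp [j.isLt]) i
    rw [htail] at hm
    have hlt : (0:ℝ) < ε' ^ (S.m + 1) * S.wedge (fun _ : Fin (S.m + 1) => ω) S.one :=
      mul_pos (pow_pos hε' _) hVpos
    linarith
  -- mass chain for mixed ω' tuples
  have hmassU : ∀ k : ℕ, k ≤ S.m →
      ε ^ (k + 1) *
        S.wedge (Fin.cons ω' fun j : Fin S.m => if (j : ℕ) < k then ω' else ω) S.one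
      ≤ S.Vol ω := by
    intro k
    induction k with
    | zero =>
      intro _
      have hst := S.step_ineq ω' ω ε τ hcmp
        (fun j : Fin S.m => if (j : ℕ) < 0 then ω' else ω) (fun j => by simp [hω]) S.one honeC
      rw [S.ddc_mass, add_zero] at hst
      have hall : (Fin.cons ω fun j : Fin S.m => if (j : ℕ) < 0 then ω' else ω)
          = fun _ : Fin (S.m + 1) => ω := by
        funext i; refine Fin.cases rfl (fun j => by simp) i
      rw [hall] at hst
      rw [show ε ^ (0 + 1) = ε by norm_num]
      exact hst
    | succ k ih =>
      intro hk1
      have hst := S.step_ineq ω' ω ε τ hcmp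
        (fun j : Fin S.m => if (j : ℕ) < k + 1 then ω' else ω)
        (fun j => by beta_reduce;  split <;> assumption) S.one honeC
      rw [S.ddc_mass, add_zero] at hst
      have hsw := S.wedge_swap ω ω' (k + 1) (by omega) (by omega)
      simp only [Nat.add_sub_cancel] at hsw
      rw [hsw] at hst
      generalize hgen : S.wedge
        (Fin.cons ω' fun j : Fin S.m => if (j : ℕ) < k + 1 then ω' else ω) S.one = A at hst ⊢
      refine le_trans ?_ (ih (by omega))
      have hmul := mul_le_mul_of_nonneg_left hst (pow_nonneg hε.le (k + 1))
      calc ε ^ (k + 1 + 1) * A = ε ^ (k + 1) * (ε * A) := by ring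
        _ ≤ _ := hmul
  have hmassU' : ∀ k : ℕ, k ≤ S.m →
      S.wedge (Fin.cons ω' fun j : Fin S.m => if (j : ℕ) < k then ω' else ω) S.one
        ≤ S.Vol ω / ε ^ (k + 1) := by
    intro k hk
    rw [le_div_iff₀ (pow_pos hε _)]
    linarith [hmassU k hk]
  -- main induction
  have key2 : ∀ k : ℕ, k ≤ S.m → ∃ C : ℝ,
      ∀ φ : S.D, φ ∈ S.psh ω' → (∀ x, (φ : C(S.X, ℝ)) x ≤ 0) →
        S.wedge (fun _ : Fin (S.m + 1) => ω) (-(φ : C(S.X, ℝ))) ≤ VB →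
        S.wedge (Fin.cons ω' fun j : Fin S.m => if (j : ℕ) < k then ω' else ω)
          (-(φ : C(S.X, ℝ))) ≤ C := by
    intro k
    induction k with
    | zero =>
      intro _
      refine ⟨(VB + 2 * ‖(τ : C(S.X, ℝ))‖ * (S.Vol ω / ε ^ (0 + 1))) / ε, ?_⟩
      intro φ hφ hle hbse
      have hg : (0 : C(S.X, ℝ)) ≤ -(φ : C(S.X, ℝ)) := by
        rw [ContinuousMap.le_def]; intro x
        simpa using hle x
      have hst := S.step_ineq ω' ω ε τ hcmp
        (fun j : Fin S.m => if (j : ℕ) < 0 then ω' else ω) (fun j => by simp [hω]) _ hg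
      have hdt := S.dterm_bound ω' hω' τ φ hφ
        (fun j : Fin S.m => if (j : ℕ) < 0 then ω' else ω) (fun j => by simp [hω])
      have hall : (Fin.cons ω fun j : Fin S.m => if (j : ℕ) < 0 then ω' else ω)
          = fun _ : Fin (S.m + 1) => ω := by
        funext i; refine Fin.cases rfl (fun j => by simp) i
      rw [hall] at hst
      have hmu := hmassU' 0 (by omega)
      have hprod := mul_le_mul_of_nonneg_left hmu
        (by positivity : (0:ℝ) ≤ 2 * ‖(τ : C(S.X, ℝ))‖)
      rw [le_div_iff₀ hε]
      linarith [hst, hdt, hbse, hprod]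
    | succ k ih =>
      intro hk1
      obtain ⟨C, hC⟩ := ih (by omega)
      refine ⟨(C + 2 * ‖(τ : C(S.X, ℝ))‖ * (S.Vol ω / ε ^ (k + 1 + 1))) / ε, ?_⟩
      intro φ hφ hle hbse
      have hg : (0 : C(S.X, ℝ)) ≤ -(φ : C(S.X, ℝ)) := by
        rw [ContinuousMap.le_def]; intro x
        simpa using hle x
      have htailpos : ∀ j : Fin S.m, (0 : S.Z) ≤ (if (j : ℕ) < k + 1 then ω' else ω) :=
        fun j => by split <;> assumption
      have hst := S.step_ineq ω' ω ε τ hcmp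
        (fun j : Fin S.m => if (j : ℕ) < k + 1 then ω' else ω) htailpos _ hg
      have hdt := S.dterm_bound ω' hω' τ φ hφ
        (fun j : Fin S.m => if (j : ℕ) < k + 1 then ω' else ω) htailpos
      have hsw := S.wedge_swap ω ω' (k + 1) (by omega) (by omega)
      simp only [Nat.add_sub_cancel] at hsw
      rw [hsw] at hst
      have hCk := hC φ hφ hle hbse
      have hmu := hmassU' (k + 1) hk1
      have hprod := mul_le_mul_of_nonneg_left hmu
        (by positivity : (0:ℝ) ≤ 2 * ‖(τ : C(S.X, ℝ))‖)
      rw [le_div_iff₀ hε]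
      linarith [hst, hdt, hCk, hprod]
  -- final assembly
  obtain ⟨C, hC⟩ := key2 S.m le_rfl
  have hμ'_eval : ∀ f : C(S.X, ℝ),
      S.muOmega ω' f = (S.Vol ω')⁻¹ * S.wedge (fun _ : Fin (S.m + 1) => ω') f := by
    intro f; unfold PPSetup.muOmega; rw [LinearMap.smul_apply, smul_eq_mul]
  have hμ'one : S.muOmega ω' S.one = 1 := by
    rw [hμ'_eval]; exact inv_mul_cancel₀ (ne_of_gt hV'pos)
  refine ⟨(S.Vol ω')⁻¹ * C, ?_⟩
  rintro x ⟨φ, hφ, rfl⟩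
  obtain ⟨x₀, hx₀⟩ : ∃ x₀ : S.X, ∀ y, (φ : C(S.X, ℝ)) y ≤ (φ : C(S.X, ℝ)) x₀ := by
    obtain ⟨x₀, -, hmax⟩ := isCompact_univ.exists_isMaxOn Set.univ_nonempty
      ((φ : C(S.X, ℝ)).continuous.continuousOn)
    exact ⟨x₀, fun y => hmax (Set.mem_univ y)⟩
  have hbddφ : BddAbove (Set.range fun p => (φ : C(S.X, ℝ)) p) :=
    ⟨(φ : C(S.X, ℝ)) x₀, by rintro y ⟨p, rfl⟩; exact hx₀ p⟩
  set c := ⨆ p : S.X, (φ : C(S.X, ℝ)) p with hcdef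
  have hcx : c = (φ : C(S.X, ℝ)) x₀ := le_antisymm (ciSup_le hx₀) (le_ciSup hbddφ x₀)
  set φ₀ : S.D := φ - S.constD c with hφ₀def
  have hφ₀c : ((φ₀ : S.D) : C(S.X, ℝ)) = (φ : C(S.X, ℝ)) - ContinuousMap.const S.X c := rfl
  have hφ₀psh : φ₀ ∈ S.psh ω' := by
    show 0 ≤ ω' + S.ddc φ₀
    rw [hφ₀def, map_sub, show S.ddc (S.constD c) = 0 from S.ddc_const c, sub_zero]
    exact hφ
  have hle0 : ∀ x, ((φ₀ : S.D) : C(S.X, ℝ)) x ≤ 0 := by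
    intro x
    rw [hφ₀c]
    simp only [ContinuousMap.sub_apply, ContinuousMap.const_apply]
    have hx : (φ : C(S.X, ℝ)) x ≤ c := le_ciSup hbddφ x
    linarith
  have hzero : ((φ₀ : S.D) : C(S.X, ℝ)) x₀ = 0 := by
    rw [hφ₀c]; simp [hcx]
  have hb := hbase φ₀ hφ₀psh hle0 ⟨x₀, hzero⟩
  have hC2 := hC φ₀ hφ₀psh hle0 hb
  have hallw' : (Fin.cons ω' fun j : Fin S.m => if (j : ℕ) < S.m then ω' else ω)
      = fun _ : Fin (S.m + 1) => ω' := by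
    funext i; refine Fin.cases rfl (fun j => by simp [j.isLt]) i
  rw [hallw'] at hC2
  have hconst : (ContinuousMap.const S.X c) = c • S.one := by
    ext x; simp [PPSetup.one]
  have hμφ₀ : S.muOmega ω' ((φ₀ : S.D) : C(S.X, ℝ))
      = S.muOmega ω' (φ : C(S.X, ℝ)) - c := by
    rw [hφ₀c, map_sub, hconst, map_smul, smul_eq_mul, hμ'one, mul_one]
  have hwneg : S.wedge (fun _ : Fin (S.m + 1) => ω') (-((φ₀ : S.D) : C(S.X, ℝ)))
      = - S.wedge (fun _ : Fin (S.m + 1) => ω') ((φ₀ : S.D) : C(S.X, ℝ)) := map_neg _ _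
  have hval : c - S.muOmega ω' (φ : C(S.X, ℝ))
      = (S.Vol ω')⁻¹ * S.wedge (fun _ : Fin (S.m + 1) => ω') (-((φ₀ : S.D) : C(S.X, ℝ))) := by
    rw [hwneg, mul_neg, ← hμ'_eval, hμφ₀]; ring
  rw [hval]
  exact mul_le_mul_of_nonneg_left hC2 (inv_nonneg.mpr hV'pos.le)
end
end
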